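/- arXiv:1409.6324 — 6 statements merged into one kernel-verified Lean document; each statement's English description precedes it below -/
import Mathlib

section
/- If X is a compact connected metric space with span zero (i.e., every subcontinuum Z of X × X with π₁(Z) ⊆ π₂(Z) meets the diagonal), then for every ε > 0 there exists δ > 0 such that: for every graph G and arc I (with endpoints p, q) embedded in the Hilbert cube whose Hausdorff distance to X is less than δ, the set M = {(x,y) ∈ G × (I \ {p,q}) : d(x,y) < ε} separates G × {p} from G × {q} in G × I. -/
/-!
If the conclusion fails for some `ε`, then for arbitrarily small `δ` there are a graph `G` and
an arc `I` with endpoints `p, q`, both `δ`-close to `X`, for which `M` does not separate. By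
wire-cutting, `(G × I) \ M` then contains a continuum joining `G × {p}` to `G × {q}`, and cutting
it down over a slightly shorter subarc gives a continuum `C ⊆ G × I` on which `d(x, y) ≥ ε` and
whose second projection is almost all of `I`. A Hausdorff limit `L` of such continua is a
subcontinuum of `X × X` with `π₁(L) ⊆ X ⊆ π₂(L)` that misses the diagonal, contradicting span
zero.
-/

open Set Topology

/-- A subset of a space is *regular* if it is closed and has finitely many connected
components, each of which is non-degenerate. -/
def IsRegularSet {G : Type*} [TopologicalSpace G] (A : Set G) : Prop :=
  IsClosed A ∧ {C : Set G | ∃ x ∈ A, C = connectedComponentIn A x}.Finite ∧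
    ∀ x ∈ A, (connectedComponentIn A x).Nontrivial

/-- A point of a graph is *ordinary* (neither a branch point nor an endpoint) if it has an
open neighborhood homeomorphic to an open interval. -/
def IsOrdinaryPoint {G : Type*} [TopologicalSpace G] (x : G) : Prop :=
  ∃ U : Set G, IsOpen U ∧ x ∈ U ∧ Nonempty (U ≃ₜ Set.Ioo (0 : ℝ) 1)

/-- A topological space is a *graph* if it is a finite union of arcs which intersect
at most in endpoints. -/
def IsGraphSpace (G : Type*) [TopologicalSpace G] : Prop :=
  ∃ (n : ℕ) (f : Fin n → unitInterval → G),
    (∀ i, Continuous (f i) ∧ Function.Injective (f i)) ∧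
    (⋃ i, Set.range (f i)) = Set.univ ∧
    ∀ i j, i ≠ j →
      Set.range (f i) ∩ Set.range (f j) ⊆ ({f i 0, f i 1} : Set G) ∩ {f j 0, f j 1}

/-- A subset of a space is a *graph* if it is a finite union of arcs which intersect
at most in endpoints. -/
def IsGraphSet {E : Type*} [TopologicalSpace E] (G : Set E) : Prop :=
  ∃ (n : ℕ) (f : Fin n → unitInterval → E),
    (∀ i, Continuous (f i) ∧ Function.Injective (f i)) ∧
    G = ⋃ i, Set.range (f i) ∧
    ∀ i j, i ≠ j →
      Set.range (f i) ∩ Set.range (f j) ⊆ ({f i 0, f i 1} : Set E) ∩ {f j 0, f j 1}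

/-- `φ` restricted to `A` is a homeomorphism onto `B`. -/
def MapsHomeoOnto {F G : Type*} [TopologicalSpace F] [TopologicalSpace G]
    (φ : F → G) (A : Set F) (B : Set G) : Prop :=
  φ '' A = B ∧ Topology.IsEmbedding (A.restrict φ)

/-- A *simple fold* on `G`, with pieces `F1, F2, F3` of `F` and projection `φ : F → G`,
satisfying properties (F1)-(F5). -/
def IsSimpleFold {F G : Type*} [TopologicalSpace F] [TopologicalSpace G]
    (φ : F → G) (F1 F2 F3 : Set F) : Prop :=
  Continuous φ ∧ F1 ∪ F2 ∪ F3 = Set.univ ∧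
  -- (F1)
  ((φ '' F1).Nonempty ∧ (φ '' F2).Nonempty ∧ (φ '' F3).Nonempty) ∧
  (IsRegularSet (φ '' F1) ∧ IsRegularSet (φ '' F2) ∧ IsRegularSet (φ '' F3)) ∧
  -- (F2)
  (φ '' F1) ∪ (φ '' F3) = Set.univ ∧ (φ '' F2) = (φ '' F1) ∩ (φ '' F3) ∧
  -- (F3)
  closure ((φ '' F1) \ (φ '' F2)) ∩ closure ((φ '' F3) \ (φ '' F2)) = ∅ ∧
  -- (F4)
  (MapsHomeoOnto φ F1 (φ '' F1) ∧ MapsHomeoOnto φ F2 (φ '' F2) ∧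
    MapsHomeoOnto φ F3 (φ '' F3)) ∧
  -- (F5)
  frontier (φ '' F1) = φ '' (F1 ∩ F2) ∧ frontier (φ '' F3) = φ '' (F2 ∩ F3) ∧
  F1 ∩ F3 = ∅

/-- `S` separates `A` from `B` within `Y`: the complement `Y \ S` is the union of two
disjoint sets, relatively open in `Y \ S`, containing `A` and `B` respectively. -/
def SeparatesWithin {E : Type*} [TopologicalSpace E] (Y S A B : Set E) : Prop :=
  ∃ U V : Set E,
    U ∪ V = Y \ S ∧ U ∩ V = ∅ ∧ A ⊆ U ∧ B ⊆ V ∧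
    (∃ U', IsOpen U' ∧ U = (Y \ S) ∩ U') ∧ (∃ V', IsOpen V' ∧ V = (Y \ S) ∩ V')

/-- `A` has *consistent complement relative to* `B`: for each component `C` of the
complement of `A`, either `∂C ⊆ B` or `∂C ∩ B = ∅`. -/
def ConsistentComplement {G : Type*} [TopologicalSpace G] (A B : Set G) : Prop :=
  ∀ x ∉ A, frontier (connectedComponentIn Aᶜ x) ⊆ B ∨
    frontier (connectedComponentIn Aᶜ x) ∩ B = ∅

/-- The *`A` side of `B`*, `σ_B(A)`: the closure of the union of all components of
`G \ B` meeting `A`. -/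
def sideOf {G : Type*} [TopologicalSpace G] (B A : Set G) : Set G :=
  closure (⋃ x ∈ {x : G | x ∉ B ∧ (connectedComponentIn Bᶜ x ∩ A).Nonempty},
    connectedComponentIn Bᶜ x)

/-- A subset of `G × [0,1]` is *straight* if it is closed, the projection is injective on
it, and its projection is regular. -/
def IsStraight {G : Type*} [TopologicalSpace G] (S : Set (G × unitInterval)) : Prop :=
  IsClosed S ∧ Set.InjOn Prod.fst S ∧ IsRegularSet (Prod.fst '' S)

/-- The *end set* of a straight set. -/
def endSet {G : Type*} [TopologicalSpace G] (S : Set (G × unitInterval)) :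
    Set (G × unitInterval) :=
  S ∩ Prod.fst ⁻¹' (frontier (Prod.fst '' S))

/-- A *stairwell structure* of height `k` for `S ⊆ G × [0,1]`, given by the pieces
`Sp 1, …, Sp k` with end set decompositions `E(Sp i) = α i ∪ β i`. -/
def IsStairwell {G : Type*} [TopologicalSpace G]
    (Sp α β : ℕ → Set (G × unitInterval)) (k : ℕ) (S : Set (G × unitInterval)) : Prop :=
  1 ≤ k ∧
  -- (S1)
  (∀ i ∈ Set.Icc 1 k, (Sp i).Nonempty ∧ IsStraight (Sp i)) ∧
  S = ⋃ i ∈ Set.Icc 1 k, Sp i ∧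
  -- (S2)
  (∀ i ∈ Set.Icc 1 k, endSet (Sp i) = α i ∪ β i ∧ α i ∩ β i = ∅ ∧
    (α i).Finite ∧ (β i).Finite) ∧
  α 1 = ∅ ∧ β k = ∅ ∧ (∀ i, 1 ≤ i → i < k → β i = α (i + 1)) ∧
  -- (S3)
  (∀ i, 1 ≤ i → i < k → ∃ V : Set G, IsOpen V ∧ Prod.fst '' β i ⊆ V ∧
    Prod.fst '' Sp i ∩ V = Prod.fst '' Sp (i + 1) ∩ V) ∧
  -- (S4)
  (∀ i ∈ Set.Icc 1 k, ConsistentComplement (Prod.fst '' Sp i) (Prod.fst '' α i) ∧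
    ConsistentComplement (Prod.fst '' Sp i) (Prod.fst '' β i)) ∧
  -- (S5)
  (∀ i ∈ Set.Icc 2 k, ∀ p ∈ α i, IsOrdinaryPoint p.1) ∧
  (∀ i j, 2 ≤ i → i < j → j ≤ k → Prod.fst '' α i ∩ Prod.fst '' α j = ∅)

/-- A *broken stairwell structure* of height `k` with a pit at level `i0`. -/
def IsBrokenStairwell {G : Type*} [TopologicalSpace G]
    (Sp α β : ℕ → Set (G × unitInterval)) (γ P1 P2 : Set (G × unitInterval))
    (k i0 : ℕ) (S : Set (G × unitInterval)) : Prop :=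
  1 ≤ k ∧ 1 ≤ i0 ∧ i0 ≤ k ∧
  -- (S1')
  (∀ i ∈ Set.Icc 1 k, (Sp i).Nonempty ∧ IsStraight (Sp i)) ∧
  P1.Nonempty ∧ IsStraight P1 ∧ P2.Nonempty ∧ IsStraight P2 ∧
  S = (⋃ i ∈ Set.Icc 1 k, Sp i) ∪ P1 ∪ P2 ∧
  -- (S2')
  (∀ i ∈ Set.Icc 1 k, i ≠ i0 → endSet (Sp i) = α i ∪ β i) ∧
  endSet (Sp i0) = α i0 ∪ β i0 ∪ γ ∧
  (∀ i ∈ Set.Icc 1 k, α i ∩ β i = ∅ ∧ (α i).Finite ∧ (β i).Finite) ∧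
  γ.Finite ∧ α i0 ∩ γ = ∅ ∧ β i0 ∩ γ = ∅ ∧
  α 1 = ∅ ∧ β k = ∅ ∧ (∀ i, 1 ≤ i → i < k → β i = α (i + 1)) ∧
  endSet P2 = endSet P1 ∪ γ ∧ endSet P1 ∩ γ = ∅ ∧
  -- (S3')
  (∀ i, 1 ≤ i → i < k → ∃ V : Set G, IsOpen V ∧ Prod.fst '' β i ⊆ V ∧
    Prod.fst '' Sp i ∩ V = Prod.fst '' Sp (i + 1) ∩ V) ∧
  (∃ V : Set G, IsOpen V ∧ Prod.fst '' endSet P1 ⊆ V ∧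
    Prod.fst '' P1 ∩ V = Prod.fst '' P2 ∩ V) ∧
  (∃ W : Set G, IsOpen W ∧ Prod.fst '' γ ⊆ W ∧
    Prod.fst '' P2 ∩ W = Prod.fst '' Sp i0 ∩ W) ∧
  -- (S4')
  (∀ i ∈ Set.Icc 1 k, ConsistentComplement (Prod.fst '' Sp i) (Prod.fst '' α i) ∧
    ConsistentComplement (Prod.fst '' Sp i) (Prod.fst '' β i)) ∧
  ConsistentComplement (Prod.fst '' Sp i0) (Prod.fst '' γ) ∧
  ConsistentComplement (Prod.fst '' P2) (Prod.fst '' endSet P1) ∧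
  ConsistentComplement (Prod.fst '' P2) (Prod.fst '' γ) ∧
  -- (S5')
  (∀ i ∈ Set.Icc 2 k, ∀ p ∈ α i, IsOrdinaryPoint p.1) ∧
  (∀ p ∈ endSet P1, IsOrdinaryPoint p.1) ∧ (∀ p ∈ γ, IsOrdinaryPoint p.1) ∧
  (∀ i j, 2 ≤ i → i < j → j ≤ k → Prod.fst '' α i ∩ Prod.fst '' α j = ∅) ∧
  (∀ i ∈ Set.Icc 2 k, Prod.fst '' α i ∩ Prod.fst '' endSet P1 = ∅ ∧
    Prod.fst '' α i ∩ Prod.fst '' γ = ∅) ∧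
  Prod.fst '' endSet P1 ∩ Prod.fst '' γ = ∅ ∧
  -- (S6')
  Prod.fst '' α i0 ∩ Prod.fst '' (P1 ∪ P2) = ∅

/-- A compactum is *hereditarily indecomposable* if every non-degenerate subcontinuum is
indecomposable, i.e. is not the union of two proper subcontinua. -/
def HereditarilyIndecomposable (X : Type*) [TopologicalSpace X] : Prop :=
  ∀ K : Set X, IsCompact K → IsConnected K → K.Nontrivial →
    ¬ ∃ A B : Set X, IsCompact A ∧ IsConnected A ∧ IsCompact B ∧ IsConnected B ∧
      A ∪ B = K ∧ A ≠ K ∧ B ≠ K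

/-- A continuum is *arc-like* if for every `ε > 0` it admits an `ε`-map onto `[0,1]`. -/
def ArcLike (X : Type*) [MetricSpace X] : Prop :=
  ∀ ε > (0 : ℝ), ∃ f : X → unitInterval, Continuous f ∧ Function.Surjective f ∧
    ∀ y, Metric.diam (f ⁻¹' {y}) < ε

/-- A continuum has *span zero* if every subcontinuum `Z ⊆ X × X` with
`π₁(Z) ⊆ π₂(Z)` meets the diagonal. -/
def SpanZero (X : Type*) [TopologicalSpace X] : Prop :=
  ∀ Z : Set (X × X), IsCompact Z → IsConnected Z →
    Prod.fst '' Z ⊆ Prod.snd '' Z → ∃ x, (x, x) ∈ Z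

noncomputable local instance : MetricSpace (ℕ → unitInterval) := PiCountable.metricSpace

open Metric TopologicalSpace Filter

section Continua

variable {α : Type*} [TopologicalSpace α]

theorem Topology.IsEmbedding.continuousOn_invFun {β : Type*} [TopologicalSpace β] [Nonempty α]
    {f : α → β} (hf : IsEmbedding f) : ContinuousOn (Function.invFun f) (range f) := by
  rw [continuousOn_iff_continuous_domRestrict]
  convert hf.toHomeomorph.symm.continuous using 1
  funext ⟨_, x, rfl⟩
  rw [hf.toHomeomorph.eq_symm_apply]
  exact Subtype.ext (Function.invFun_eq (f := f) ⟨x, rfl⟩)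

theorem exists_isClopen_of_connectedComponent_ne [CompactSpace α] [T2Space α] {A B : Set α}
    (hA : IsClosed A) (hB : IsClosed B)
    (h : ∀ x ∈ A, ∀ y ∈ B, connectedComponent x ≠ connectedComponent y) :
    ∃ P, IsClopen P ∧ A ⊆ P ∧ Disjoint P B := by
  -- separate the images of `A` and `B` in the (profinite) space of components
  let π : α → ConnectedComponents α := ConnectedComponents.mk
  have hπ : Continuous π := ConnectedComponents.continuous_coe
  obtain ⟨P, hP, hAP, hPB⟩ := exists_clopen_of_closed_subset_open
    ((hA.isCompact.image hπ).isClosed) (hB.isCompact.image hπ).isClosed.isOpen_compl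
    (by
      rintro _ ⟨x, hx, rfl⟩ ⟨y, hy, hxy⟩
      exact h x hx y hy (ConnectedComponents.coe_eq_coe.1 hxy.symm))
  refine ⟨π ⁻¹' P, hP.preimage hπ, image_subset_iff.1 hAP, ?_⟩
  exact Set.disjoint_left.2 fun y hyP hyB => hPB hyP ⟨y, hyB, rfl⟩

/-- The wire-cutting theorem. -/
theorem IsCompact.split_or_exists_isPreconnected_joining [T2Space α] {K A B : Set α}
    (hK : IsCompact K) (hA : IsClosed A) (hB : IsClosed B) (hAK : A ⊆ K) (hBK : B ⊆ K) :
    (∃ P Q, IsCompact P ∧ IsCompact Q ∧ P ∪ Q = K ∧ Disjoint P Q ∧ A ⊆ P ∧ B ⊆ Q) ∨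
      ∃ Z ⊆ K, IsCompact Z ∧ IsPreconnected Z ∧ (Z ∩ A).Nonempty ∧ (Z ∩ B).Nonempty := by
  have : CompactSpace K := isCompact_iff_compactSpace.1 hK
  have hval : Continuous ((↑) : K → α) := continuous_subtype_val
  by_cases h : ∀ x ∈ ((↑) : K → α) ⁻¹' A, ∀ y ∈ ((↑) : K → α) ⁻¹' B,
      connectedComponent x ≠ connectedComponent y
  · obtain ⟨P, hP, hAP, hPB⟩ :=
      exists_isClopen_of_connectedComponent_ne (hA.preimage hval) (hB.preimage hval) h
    refine .inl ⟨(↑) '' P, (↑) '' Pᶜ, hP.isClosed.isCompact.image hval,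
      hP.compl.isClosed.isCompact.image hval, ?_, ?_, ?_, ?_⟩
    · rw [← image_union, union_compl_self, image_univ, Subtype.range_coe]
    · exact (disjoint_compl_right.image Subtype.val_injective.injOn (subset_univ _)
        (subset_univ _))
    · exact fun x hx => ⟨⟨x, hAK hx⟩, hAP hx, rfl⟩
    · exact fun y hy => ⟨⟨y, hBK hy⟩, fun hyP => Set.disjoint_left.1 hPB hyP hy, rfl⟩
  · push Not at h
    obtain ⟨x, hx, y, hy, hxy⟩ := h
    refine .inr ⟨(↑) '' connectedComponent x, Subtype.coe_image_subset K _,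
      isClosed_connectedComponent.isCompact.image hval,
      isPreconnected_connectedComponent.image _ hval.continuousOn,
      ⟨x, mem_image_of_mem _ mem_connectedComponent, hx⟩,
      ⟨y, mem_image_of_mem _ (hxy ▸ mem_connectedComponent), hy⟩⟩

theorem separatesWithin_of_isCompact [T2Space α] {Y S A B P Q : Set α} (hP : IsCompact P)
    (hQ : IsCompact Q) (hPQ : P ∪ Q = Y \ S) (hd : Disjoint P Q) (hA : A ⊆ P) (hB : B ⊆ Q) :
    SeparatesWithin Y S A B := by
  obtain ⟨U, V, hU, hV, hPU, hQV, hUV⟩ := SeparatedNhds.of_isCompact_isCompact hP hQ hd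
  refine ⟨P, Q, hPQ, hd.eq_bot, hA, hB, ⟨U, hU, ?_⟩, ⟨V, hV, ?_⟩⟩
  · rw [← hPQ, union_inter_distrib_right, inter_eq_left.2 hPU,
      (hUV.mono_right hQV).symm.inter_eq, union_empty]
  · rw [← hPQ, union_inter_distrib_right, inter_eq_left.2 hQV,
      (hUV.mono_left hPU).inter_eq, empty_union]

theorem exists_isPreconnected_joining_of_not_separatesWithin [T2Space α] {Y S A B : Set α}
    (hK : IsCompact (Y \ S)) (hA : IsClosed A) (hB : IsClosed B) (hAK : A ⊆ Y \ S)
    (hBK : B ⊆ Y \ S) (hsep : ¬ SeparatesWithin Y S A B) :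
    ∃ Z ⊆ Y \ S, IsCompact Z ∧ IsPreconnected Z ∧ (Z ∩ A).Nonempty ∧ (Z ∩ B).Nonempty := by
  refine (hK.split_or_exists_isPreconnected_joining hA hB hAK hBK).resolve_left ?_
  rintro ⟨P, Q, hP, hQ, hPQ, hd, hAP, hBQ⟩
  exact hsep (separatesWithin_of_isCompact hP hQ hPQ hd hAP hBQ)

theorem IsPreconnected.exists_isPreconnected_image_eq_Icc [T2Space α] {β : Type*}
    [LinearOrder β] [TopologicalSpace β] [OrderClosedTopology β] {Z : Set α}
    (hZ : IsPreconnected Z) (hZc : IsCompact Z) {f : α → β} (hf : ContinuousOn f Z)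
    {x y : α} (hx : x ∈ Z) (hy : y ∈ Z) {a b : β} (hxa : f x ≤ a) (hab : a ≤ b)
    (hby : b ≤ f y) :
    ∃ C ⊆ Z, IsCompact C ∧ IsPreconnected C ∧ f '' C = Icc a b := by
  have hZcl := hZc.isClosed
  have hK := hf.preimage_isClosed_of_isClosed hZcl (isClosed_Icc (a := a) (b := b))
  have hA := hf.preimage_isClosed_of_isClosed hZcl (isClosed_singleton (x := a))
  have hB := hf.preimage_isClosed_of_isClosed hZcl (isClosed_singleton (x := b))
  rcases (hZc.of_isClosed_subset hK inter_subset_left).split_or_exists_isPreconnected_joining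
      hA hB (inter_subset_inter_right _ (preimage_mono (singleton_subset_iff.2 ⟨le_rfl, hab⟩)))
      (inter_subset_inter_right _ (preimage_mono (singleton_subset_iff.2 ⟨hab, le_rfl⟩))) with
    ⟨P, Q, hP, hQ, hPQ, hd, hAP, hBQ⟩ | ⟨C, hCK, hCc, hC, ⟨u, hCu, hu⟩, ⟨v, hCv, hv⟩⟩
  · -- a split of the middle part extends to a split of `Z` by adding the parts over the two ends
    exfalso
    have hPK : P ⊆ Z ∩ f ⁻¹' Icc a b := hPQ ▸ subset_union_left
    have hQK : Q ⊆ Z ∩ f ⁻¹' Icc a b := hPQ ▸ subset_union_right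
    have hlow := hf.preimage_isClosed_of_isClosed hZcl (isClosed_Iic (a := a))
    have hhigh := hf.preimage_isClosed_of_isClosed hZcl (isClosed_Ici (a := b))
    set u := (Z ∩ f ⁻¹' Iic a) ∪ P
    set v := (Z ∩ f ⁻¹' Ici b) ∪ Q
    have hcover : Z ⊆ u ∪ v := fun z hz => by
      rcases le_total (f z) a with hza | haz
      · exact .inl (.inl ⟨hz, hza⟩)
      rcases le_total b (f z) with hbz | hzb
      · exact .inr (.inl ⟨hz, hbz⟩)
      · exact (hPQ.symm ▸ ⟨hz, haz, hzb⟩ : z ∈ P ∪ Q).imp .inr .inr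
    have hdisj : Disjoint u v := by
      refine Set.disjoint_left.2 fun z hzu hzv => @Set.disjoint_left.1 hd z ?_ ?_
      · rcases hzu with ⟨hzZ, hza⟩ | hzP
        · refine hAP ⟨hzZ, le_antisymm hza ?_⟩
          rcases hzv with ⟨-, hbz⟩ | hzQ
          exacts [hab.trans hbz, (hQK hzQ).2.1]
        · exact hzP
      · rcases hzv with ⟨hzZ, hbz⟩ | hzQ
        · refine hBQ ⟨hzZ, le_antisymm ?_ hbz⟩
          rcases hzu with ⟨-, hza⟩ | hzP
          exacts [hza.trans hab, (hPK hzP).2.2]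
        · exact hzQ
    have hxu : x ∈ u := .inl ⟨hx, hxa⟩
    have hyv : y ∈ v := .inl ⟨hy, hby⟩
    rcases (isPreconnected_iff_subset_of_fully_disjoint_closed hZcl).1 hZ u v
        (hlow.union hP.isClosed) (hhigh.union hQ.isClosed) hcover hdisj with h | h
    · exact Set.disjoint_left.1 hdisj (h hy) hyv
    · exact Set.disjoint_left.1 hdisj hxu (h hx)
  · refine ⟨C, hCK.trans inter_subset_left, hCc, hC,
      (image_subset_iff.2 fun z hz => (hCK hz).2).antisymm ?_⟩
    have := hC.intermediate_value hCu hCv (hf.mono (hCK.trans inter_subset_left))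
    rwa [hu.2, hv.2] at this

end Continua

section Arc

variable {E : Type*} [MetricSpace E]

theorem exists_far_continuum_of_not_separatesWithin {G : Set E} {γ : unitInterval → E} {ε : ℝ}
    (hG : IsCompact G) (hγ : Continuous γ) (hγi : Function.Injective γ)
    (hsep : ¬ SeparatesWithin (G ×ˢ range γ)
      {p : E × E | p.1 ∈ G ∧ p.2 ∈ range γ \ {γ 0, γ 1} ∧ dist p.1 p.2 < ε}
      (G ×ˢ {γ 0}) (G ×ˢ {γ 1}))
    {a b : unitInterval} (ha : 0 < a) (hab : a ≤ b) (hb : b < 1) :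
    ∃ C ⊆ G ×ˢ range γ, IsCompact C ∧ IsConnected C ∧ (∀ z ∈ C, ε ≤ dist z.1 z.2) ∧
      Prod.snd '' C = γ '' Icc a b := by
  set Y := G ×ˢ range γ
  set O := {p : E × E | p.2 ≠ γ 0 ∧ p.2 ≠ γ 1 ∧ dist p.1 p.2 < ε}
  have hYO : Y \ {p : E × E | p.1 ∈ G ∧ p.2 ∈ range γ \ {γ 0, γ 1} ∧ dist p.1 p.2 < ε} =
      Y \ O := by
    ext p
    simp only [Y, O, Set.mem_sdiff, mem_prod, mem_ofPred_eq, mem_insert_iff, mem_singleton_iff]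
    tauto
  have hO : IsOpen O :=
    (isOpen_ne.preimage continuous_snd).inter ((isOpen_ne.preimage continuous_snd).inter
      (isOpen_lt (continuous_fst.dist continuous_snd) continuous_const))
  have hface : ∀ q ∈ ({γ 0, γ 1} : Set E), G ×ˢ {q} ⊆ Y \ O := by
    rintro q hq p ⟨hp, rfl : p.2 = q⟩
    refine ⟨⟨hp, ?_⟩, fun h => hq.elim h.1 h.2.1⟩
    rcases hq with h | h <;> rw [h] <;> exact mem_range_self _
  obtain ⟨Z, hZK, hZc, hZ, ⟨x, hxZ, hx⟩, ⟨y, hyZ, hy⟩⟩ :=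
    exists_isPreconnected_joining_of_not_separatesWithin
      (hYO ▸ (hG.prod (isCompact_range hγ)).diff hO) (hG.isClosed.prod isClosed_singleton)
      (hG.isClosed.prod isClosed_singleton) (hYO ▸ hface _ (.inl rfl))
      (hYO ▸ hface _ (.inr rfl)) hsep
  rw [hYO] at hZK
  have hZI : MapsTo Prod.snd Z (range γ) := fun z hz => (hZK hz).1.2
  have hf : ContinuousOn (fun z : E × E => Function.invFun γ z.2) Z :=
    (hγ.isClosedEmbedding hγi).isEmbedding.continuousOn_invFun.comp
      continuous_snd.continuousOn hZI
  have hinv : ∀ s, Function.invFun γ (γ s) = s := Function.leftInverse_invFun hγi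
  obtain ⟨C, hCZ, hCc, hC, hfC⟩ := hZ.exists_isPreconnected_image_eq_Icc hZc hf hxZ hyZ
    (by simp only [mem_singleton_iff.1 hx.2, hinv]; exact ha.le) hab
    (by simp only [mem_singleton_iff.1 hy.2, hinv]; exact hb.le)
  have hsnd : Prod.snd '' C = γ '' Icc a b := by
    rw [← hfC, image_image]
    exact image_congr fun z hz => (Function.invFun_eq (hZI (hCZ hz))).symm
  refine ⟨C, fun z hz => (hZK (hCZ hz)).1, hCc,
    ⟨Nonempty.of_image (hfC ▸ nonempty_Icc.2 hab), hC⟩, fun z hz => ?_, hsnd⟩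
  obtain ⟨t, ⟨hat, htb⟩, ht⟩ := hsnd ▸ mem_image_of_mem Prod.snd hz
  by_contra! hlt
  refine (hZK (hCZ hz)).2 ⟨?_, ?_, hlt⟩ <;> rw [← ht] <;> intro h
  · exact (ha.trans_le hat).ne' (hγi h)
  · exact (htb.trans_lt hb).ne (hγi h)

end Arc

section Near

variable {E : Type*} [MetricSpace E]

theorem exists_Icc_forall_dist_lt {γ : unitInterval → E} (hγ : Continuous γ) {η : ℝ}
    (hη : 0 < η) :
    ∃ a b : unitInterval, 0 < a ∧ a ≤ b ∧ b < 1 ∧ ∀ s, ∃ t ∈ Icc a b, dist (γ s) (γ t) < η := by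
  obtain ⟨θ, hθ, hγθ⟩ :=
    Metric.uniformContinuous_iff.1 (CompactSpace.uniformContinuous_of_continuous hγ) η hη
  set c := min (θ / 2) (1 / 2)
  have hc : 0 < c := by positivity
  have hc2 : c ≤ 1 / 2 := min_le_right _ _
  have hcθ : c < θ := (min_le_left _ _).trans_lt (half_lt_self hθ)
  set a : unitInterval := ⟨c, hc.le, by linarith⟩
  set b : unitInterval := ⟨1 - c, by linarith, by linarith⟩
  have hab : a ≤ b := Subtype.coe_le_coe.1 (show c ≤ 1 - c by linarith)
  refine ⟨a, b, Subtype.coe_lt_coe.1 hc, hab, Subtype.coe_lt_coe.1 (show 1 - c < 1 by linarith),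
    fun s => ?_⟩
  have hs : (s : ℝ) ∈ Icc 0 1 := s.2
  rcases le_total s a with hsa | has
  · refine ⟨a, ⟨le_rfl, hab⟩, hγθ ?_⟩
    rw [Subtype.dist_eq, Real.dist_eq, abs_lt]
    have : (s : ℝ) ≤ c := hsa
    constructor <;> linarith [hs.1]
  rcases le_total s b with hsb | hbs
  · exact ⟨s, ⟨has, hsb⟩, by simpa using hη⟩
  · refine ⟨b, ⟨hab, le_rfl⟩, hγθ ?_⟩
    rw [Subtype.dist_eq, Real.dist_eq, abs_lt]
    have : 1 - c ≤ (s : ℝ) := hbs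
    constructor <;> linarith [hs.2]

theorem exists_far_continuum_near [CompactSpace E] {X G : Set E} {γ : unitInterval → E}
    {ε δ : ℝ} (hX : X.Nonempty) (hG : IsCompact G) (hγ : Continuous γ)
    (hγi : Function.Injective γ) (hXG : hausdorffDist X G < δ)
    (hXI : hausdorffDist X (range γ) < δ)
    (hsep : ¬ SeparatesWithin (G ×ˢ range γ)
      {p : E × E | p.1 ∈ G ∧ p.2 ∈ range γ \ {γ 0, γ 1} ∧ dist p.1 p.2 < ε}
      (G ×ˢ {γ 0}) (G ×ˢ {γ 1})) :
    ∃ C : Set (E × E), IsCompact C ∧ IsConnected C ∧ (∀ z ∈ C, ε ≤ dist z.1 z.2) ∧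
      C ⊆ cthickening δ X ×ˢ cthickening δ X ∧ ∀ x ∈ X, ∃ z ∈ C, dist x z.2 ≤ 2 * δ := by
  obtain ⟨a, b, ha, hab, hb, hγab⟩ :=
    exists_Icc_forall_dist_lt hγ (hausdorffDist_nonneg.trans_lt hXI)
  obtain ⟨C, hCY, hCc, hC, hCfar, hCsnd⟩ :=
    exists_far_continuum_of_not_separatesWithin hG hγ hγi hsep ha hab hb
  have hfin : ∀ {S : Set E}, S.Nonempty → hausdorffEDist X S ≠ ⊤ := fun hS =>
    hausdorffEDist_ne_top_of_nonempty_of_bounded hX hS isBounded_of_compactSpace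
      isBounded_of_compactSpace
  have hnear : ∀ {S : Set E}, hausdorffDist X S < δ → S ⊆ cthickening δ X := fun hS y hy => by
    obtain ⟨x, hx, hxy⟩ := exists_dist_lt_of_hausdorffDist_lt' hy hS (hfin ⟨y, hy⟩)
    exact mem_cthickening_of_dist_le y x δ X hx (dist_comm x y ▸ hxy.le)
  refine ⟨C, hCc, hC, hCfar, fun z hz => ⟨hnear hXG (hCY hz).1, hnear hXI (hCY hz).2⟩,
    fun x hx => ?_⟩
  obtain ⟨_, ⟨s, rfl⟩, hxs⟩ :=
    exists_dist_lt_of_hausdorffDist_lt hx hXI (hfin (range_nonempty γ))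
  obtain ⟨t, ht, hst⟩ := hγab s
  obtain ⟨z, hz, hzt⟩ := hCsnd.symm ▸ mem_image_of_mem γ ht
  refine ⟨z, hz, ?_⟩
  calc dist x z.2 ≤ dist x (γ s) + dist (γ s) (γ t) := hzt ▸ dist_triangle _ _ _
    _ ≤ 2 * δ := by linarith

end Near

theorem IsGraphSet.isCompact {E : Type*} [TopologicalSpace E] {G : Set E} (hG : IsGraphSet G) :
    IsCompact G := by
  obtain ⟨n, f, hf, rfl, -⟩ := hG
  exact isCompact_iUnion fun i => isCompact_range (hf i).1

theorem TopologicalSpace.NonemptyCompacts.isClosed_setOf_isPreconnected {α : Type*}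
    [TopologicalSpace α] [T2Space α] :
    IsClosed {K : NonemptyCompacts α | IsPreconnected (K : Set α)} := by
  refine isOpen_compl_iff.1 (isOpen_iff_forall_mem_open.2 fun K hK => ?_)
  rw [mem_compl_iff, mem_ofPred_eq,
    isPreconnected_iff_subset_of_fully_disjoint_closed K.isCompact.isClosed] at hK
  push Not at hK
  obtain ⟨u, v, hu, hv, hKuv, huv, hKu, hKv⟩ := hK
  obtain ⟨U, V, hU, hV, hKU, hKV, hUV⟩ := SeparatedNhds.of_isCompact_isCompact
    (K.isCompact.inter_right hu) (K.isCompact.inter_right hv)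
    (huv.mono inter_subset_right inter_subset_right)
  -- the splitting of `K` by `U` and `V` persists in a neighbourhood of `K`
  refine ⟨{L | (L : Set α) ⊆ U ∪ V} ∩ {L | ((L : Set α) ∩ U).Nonempty} ∩
    {L | ((L : Set α) ∩ V).Nonempty}, ?_, ?_, ?_⟩
  · rintro L ⟨⟨hLUV, hLU⟩, hLV⟩ hL
    obtain ⟨x, -, hxU, hxV⟩ := hL U V hU hV hLUV hLU hLV
    exact Set.disjoint_left.1 hUV hxU hxV
  · exact ((NonemptyCompacts.isOpen_subsets_of_isOpen (hU.union hV)).inter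
      (NonemptyCompacts.isOpen_inter_nonempty_of_isOpen hU)).inter
      (NonemptyCompacts.isOpen_inter_nonempty_of_isOpen hV)
  · obtain ⟨x, hxK, hxv⟩ := not_subset.1 hKv
    obtain ⟨y, hyK, hyu⟩ := not_subset.1 hKu
    refine ⟨⟨fun z hz => ?_, x, hxK, hKU ⟨hxK, (hKuv hxK).resolve_right hxv⟩⟩,
      y, hyK, hKV ⟨hyK, (hKuv hyK).resolve_left hyu⟩⟩
    rcases hKuv hz with h | h
    exacts [.inl (hKU ⟨hz, h⟩), .inr (hKV ⟨hz, h⟩)]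

theorem exists_isConnected_of_forall_near {α : Type*} [MetricSpace α] [CompactSpace α]
    {X : Set α} (hX : IsClosed X) {F : Set (α × α)} (hF : IsClosed F)
    (h : ∀ δ > 0, ∃ C : Set (α × α), IsCompact C ∧ IsConnected C ∧ C ⊆ F ∧
      C ⊆ cthickening δ X ×ˢ cthickening δ X ∧ ∀ x ∈ X, ∃ z ∈ C, dist x z.2 ≤ δ) :
    ∃ L : Set (α × α), IsCompact L ∧ IsConnected L ∧ L ⊆ F ∧ L ⊆ X ×ˢ X ∧
      X ⊆ Prod.snd '' L := by
  choose! C hCc hC hCF hCX hXC using h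
  have hpos : ∀ n : ℕ, (0 : ℝ) < 1 / (n + 1) := fun n => Nat.one_div_pos_of_nat
  let c : ℕ → NonemptyCompacts (α × α) := fun n =>
    ⟨⟨C (1 / (n + 1)), hCc _ (hpos n)⟩, (hC _ (hpos n)).nonempty⟩
  obtain ⟨L, -, hL⟩ := isCompact_univ.exists_mapClusterPt (f := atTop) (u := c) (by simp)
  have hlim : ∀ S : Set (NonemptyCompacts (α × α)), IsClosed S → (∀ᶠ n in atTop, c n ∈ S) →
      L ∈ S := fun S hS => hS.mem_of_mapClusterPt hL
  have hsmall : ∀ r > 0, ∀ᶠ n : ℕ in atTop, 1 / ((n : ℝ) + 1) ≤ r := fun r hr =>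
    tendsto_one_div_add_atTop_nhds_zero_nat.eventually (ge_mem_nhds hr)
  have hLX : ∀ r > 0, (L : Set (α × α)) ⊆ cthickening r X ×ˢ cthickening r X := fun r hr =>
    hlim _ (NonemptyCompacts.isClosed_subsets_of_isClosed
      (isClosed_cthickening.prod isClosed_cthickening)) ((hsmall r hr).mono fun n hn =>
        (hCX _ (hpos n)).trans (prod_mono (cthickening_mono hn X) (cthickening_mono hn X)))
  have hXL : ∀ x ∈ X, ∀ r > 0, ((L : Set (α × α)) ∩ Prod.snd ⁻¹' closedBall x r).Nonempty :=
    fun x hx r hr => hlim _ (NonemptyCompacts.isClosed_inter_nonempty_of_isClosed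
      (isClosed_closedBall.preimage continuous_snd)) ((hsmall r hr).mono fun n hn => by
        obtain ⟨z, hz, hxz⟩ := hXC _ (hpos n) x hx
        exact ⟨z, hz, mem_closedBall'.2 (hxz.trans hn)⟩)
  refine ⟨L, L.isCompact, ⟨L.nonempty, hlim _ NonemptyCompacts.isClosed_setOf_isPreconnected
      (.of_forall fun n => (hC _ (hpos n)).isPreconnected)⟩,
    hlim _ (NonemptyCompacts.isClosed_subsets_of_isClosed hF)
      (.of_forall fun n => hCF _ (hpos n)), fun z hz => ?_, fun x hx => ?_⟩
  · rw [mem_prod, ← hX.closure_eq, closure_eq_iInter_cthickening, mem_iInter₂, mem_iInter₂]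
    exact ⟨fun r hr => (hLX r hr hz).1, fun r hr => (hLX r hr hz).2⟩
  · rw [← (L.isCompact.image continuous_snd).isClosed.closure_eq,
      closure_eq_iInter_cthickening, mem_iInter₂]
    intro r hr
    obtain ⟨z, hz, hxz⟩ := hXL x hx r hr
    exact mem_cthickening_of_dist_le x z.2 r _ (mem_image_of_mem _ hz) (mem_closedBall'.1 hxz)

/-- span zero gives separators close to the continuum. -/
theorem stmt0 (X : Set (ℕ → unitInterval))
    (hXc : IsCompact X) (hXconn : IsConnected X)
    (hspan : ∀ Z : Set ((ℕ → unitInterval) × (ℕ → unitInterval)),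
      Z ⊆ X ×ˢ X → IsCompact Z → IsConnected Z →
      Prod.fst '' Z ⊆ Prod.snd '' Z → ∃ x, (x, x) ∈ Z) :
    ∀ ε > (0 : ℝ), ∃ δ > (0 : ℝ),
      ∀ (G I : Set (ℕ → unitInterval)) (γ : unitInterval → (ℕ → unitInterval)),
        IsGraphSet G →
        Continuous γ → Function.Injective γ → Set.range γ = I →
        Metric.hausdorffDist X G < δ → Metric.hausdorffDist X I < δ →
        SeparatesWithin (G ×ˢ I)
          {p : (ℕ → unitInterval) × (ℕ → unitInterval) |
            p.1 ∈ G ∧ p.2 ∈ I \ {γ 0, γ 1} ∧ dist p.1 p.2 < ε}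
          (G ×ˢ {γ 0}) (G ×ˢ {γ 1}) := by
  intro ε hε
  by_contra! hbad
  have hnear : ∀ δ > 0, ∃ C : Set ((ℕ → unitInterval) × (ℕ → unitInterval)), IsCompact C ∧
      IsConnected C ∧ C ⊆ {z | ε ≤ dist z.1 z.2} ∧ C ⊆ cthickening δ X ×ˢ cthickening δ X ∧
      ∀ x ∈ X, ∃ z ∈ C, dist x z.2 ≤ δ := by
    intro δ hδ
    obtain ⟨G, I, γ, hG, hγ, hγi, rfl, hXG, hXI, hsep⟩ := hbad (δ / 2) (half_pos hδ)
    obtain ⟨C, hCc, hC, hCfar, hCX, hXC⟩ :=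
      exists_far_continuum_near hXconn.nonempty hG.isCompact hγ hγi hXG hXI hsep
    have hmono := cthickening_mono (half_le_self hδ.le) X
    refine ⟨C, hCc, hC, hCfar, hCX.trans (prod_mono hmono hmono), fun x hx => ?_⟩
    simpa [mul_div_cancel₀] using hXC x hx
  obtain ⟨L, hLc, hL, hLfar, hLX, hXL⟩ := exists_isConnected_of_forall_near hXc.isClosed
    (isClosed_le continuous_const (continuous_fst.dist continuous_snd)) hnear
  obtain ⟨x, hx⟩ := hspan L hLX hLc hL fun _ ⟨z, hz, hzx⟩ => hXL (hzx ▸ (hLX hz).1)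
  exact hε.not_ge (by simpa using hLfar hx)
end

section
/- Every arc-like continuum has span zero: if X is a continuum such that for each ε > 0 there is an ε-map from X onto [0,1], then every subcontinuum Z ⊆ X × X with π₁(Z) ⊆ π₂(Z) meets the diagonal. -/
open Set Topology

/-- every arc-like continuum has span zero. -/
theorem stmt1 (X : Type*) [MetricSpace X] [CompactSpace X] [ConnectedSpace X]
    (h : ArcLike X) :
    ∀ Z : Set (X × X), IsCompact Z → IsConnected Z →
      Prod.fst '' Z ⊆ Prod.snd '' Z → ∃ x, (x, x) ∈ Z := by
  intro Z hZc hZconn hsub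
  have hZne : Z.Nonempty := hZconn.nonempty
  -- For every ε > 0 there is z ∈ Z with dist z.1 z.2 < ε
  have key : ∀ ε > (0 : ℝ), ∃ z ∈ Z, dist z.1 z.2 < ε := by
    intro ε hε
    obtain ⟨f, hfc, hfs, hfd⟩ := h ε hε
    -- consider g z = f z.1 - f z.2 on Z
    set g : X × X → ℝ := fun z => (f z.1 : ℝ) - (f z.2 : ℝ) with hg
    have hgc : Continuous g := by
      apply Continuous.sub
      · exact continuous_subtype_val.comp (hfc.comp continuous_fst)
      · exact continuous_subtype_val.comp (hfc.comp continuous_snd)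
    -- not all positive
    have hnotpos : ∃ z ∈ Z, g z ≤ 0 := by
      by_contra hcon
      push_neg at hcon
      obtain ⟨z, hzZ, hzmax⟩ := hZc.exists_isMaxOn hZne
        (continuous_subtype_val.comp (hfc.comp continuous_snd)).continuousOn
      have : z.1 ∈ Prod.snd '' Z := hsub ⟨z, hzZ, rfl⟩
      obtain ⟨w, hwZ, hw⟩ := this
      have h1 : (f w.2 : ℝ) ≤ f z.2 := hzmax hwZ
      rw [hw] at h1
      have h3 : g z > 0 := hcon z hzZ
      rw [hg] at h3
      dsimp at h3
      linarith
    have hnotneg : ∃ z ∈ Z, 0 ≤ g z := by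
      by_contra hcon
      push_neg at hcon
      obtain ⟨z, hzZ, hzmin⟩ := hZc.exists_isMinOn hZne
        (continuous_subtype_val.comp (hfc.comp continuous_snd)).continuousOn
      have : z.1 ∈ Prod.snd '' Z := hsub ⟨z, hzZ, rfl⟩
      obtain ⟨w, hwZ, hw⟩ := this
      have h1 : (f z.2 : ℝ) ≤ f w.2 := hzmin hwZ
      rw [hw] at h1
      have h3 : g z < 0 := hcon z hzZ
      rw [hg] at h3
      dsimp at h3
      linarith
    obtain ⟨a, haZ, ha⟩ := hnotpos
    obtain ⟨b, hbZ, hb⟩ := hnotneg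
    have h0 : (0 : ℝ) ∈ g '' Z :=
      hZconn.isPreconnected.intermediate_value haZ hbZ hgc.continuousOn ⟨ha, hb⟩
    obtain ⟨z, hzZ, hz0⟩ := h0
    refine ⟨z, hzZ, ?_⟩
    have heq : f z.1 = f z.2 := by
      rw [hg] at hz0
      exact Subtype.ext (by dsimp at hz0 ⊢; linarith)
    have hmem1 : z.1 ∈ f ⁻¹' {f z.2} := by simp [heq]
    have hmem2 : z.2 ∈ f ⁻¹' {f z.2} := by simp
    have hbdd : Bornology.IsBounded (f ⁻¹' {f z.2}) :=
      (isClosed_singleton.preimage hfc).isCompact.isBounded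
    calc dist z.1 z.2 ≤ Metric.diam (f ⁻¹' {f z.2}) :=
          Metric.dist_le_diam_of_mem hbdd hmem1 hmem2
      _ < ε := hfd _
  -- take the minimizer of dist on Z
  obtain ⟨z, hzZ, hzmin⟩ := hZc.exists_isMinOn hZne
    (continuous_dist.comp (continuous_fst.prodMk continuous_snd)).continuousOn
  have hd0 : dist z.1 z.2 ≤ 0 := by
    by_contra hcon
    push_neg at hcon
    obtain ⟨w, hwZ, hw⟩ := key (dist z.1 z.2) hcon
    exact absurd (hzmin hwZ) (by simpa using hw.not_ge)
  have : z.1 = z.2 := by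
    have := dist_nonneg (x := z.1) (y := z.2)
    exact dist_le_zero.mp hd0
  exact ⟨z.1, by rw [show ((z.1, z.1) : X × X) = z from Prod.ext rfl this]; exact hzZ⟩
end

section
/- Let φ: F → G be a simple fold with F = F₁ ∪ F₂ ∪ F₃ and Gᵢ = φ(Fᵢ). Then ∂G₂ = ∂G₁ ∪ ∂G₃ and ∂G₁ ∩ ∂G₃ = ∅. -/
open Set Topology

/-- for a simple fold, ∂G₂ = ∂G₁ ∪ ∂G₃ and ∂G₁ ∩ ∂G₃ = ∅. -/
theorem stmt2 (F G : Type*) [TopologicalSpace F] [TopologicalSpace G]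
    [CompactSpace F] [T2Space F] [CompactSpace G] [T2Space G]
    (hF : IsGraphSpace F) (hG : IsGraphSpace G)
    (φ : F → G) (F1 F2 F3 : Set F) (h : IsSimpleFold φ F1 F2 F3) :
    frontier (φ '' F2) = frontier (φ '' F1) ∪ frontier (φ '' F3) ∧
    frontier (φ '' F1) ∩ frontier (φ '' F3) = ∅ := by
  obtain ⟨-, -, -, ⟨⟨hAc, -⟩, -, ⟨hBc, -⟩⟩, hU, hC, hF3, -⟩ := h
  set A := φ '' F1 with hA
  set B := φ '' F3 with hB
  set C := φ '' F2 with hCdef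
  have fcc : ∀ S : Set G, frontier S ⊆ closure Sᶜ := fun S =>
    frontier_eq_closure_inter_closure (s := S) ▸ inter_subset_right
  -- complements
  have hAcB : Aᶜ ⊆ B := by
    intro x hx
    rcases (hU ▸ mem_univ x : x ∈ A ∪ B) with h' | h'
    · exact absurd h' hx
    · exact h'
  have hBcA : Bᶜ ⊆ A := by
    intro x hx
    rcases (hU ▸ mem_univ x : x ∈ A ∪ B) with h' | h'
    · exact h'
    · exact absurd h' hx
  have hCsubA : C ⊆ A := hC ▸ inter_subset_left
  have hCsubB : C ⊆ B := hC ▸ inter_subset_right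
  have hfA : frontier A ⊆ C := by
    intro x hx
    have hxA : x ∈ A := hAc.frontier_subset hx
    have hxB : x ∈ B := by
      have : x ∈ closure Aᶜ := fcc _ hx
      have : x ∈ closure B := closure_mono hAcB this
      rwa [hBc.closure_eq] at this
    rw [hC]; exact ⟨hxA, hxB⟩
  have hfB : frontier B ⊆ C := by
    intro x hx
    have hxB : x ∈ B := hBc.frontier_subset hx
    have hxA : x ∈ A := by
      have : x ∈ closure Bᶜ := fcc _ hx
      have : x ∈ closure A := closure_mono hBcA this
      rwa [hAc.closure_eq] at this
    rw [hC]; exact ⟨hxA, hxB⟩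
  have hCc : Cᶜ = Aᶜ ∪ Bᶜ := by rw [hC, compl_inter]
  constructor
  · apply Subset.antisymm
    · intro x hx
      have hxC : x ∈ C := by
        rw [hC] at hx ⊢; exact (hAc.inter hBc).frontier_subset hx
      have hxcl : x ∈ closure Cᶜ := fcc _ hx
      rw [hCc, closure_union] at hxcl
      rcases hxcl with h' | h'
      · left
        rw [frontier_eq_closure_inter_closure]
        exact ⟨subset_closure (hCsubA hxC), h'⟩
      · right
        rw [frontier_eq_closure_inter_closure]
        exact ⟨subset_closure (hCsubB hxC), h'⟩
    · rintro x (hx | hx)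
      · rw [frontier_eq_closure_inter_closure]
        refine ⟨subset_closure (hfA hx), ?_⟩
        have : x ∈ closure Aᶜ := fcc _ hx
        exact closure_mono (by rw [hCc]; exact subset_union_left) this
      · rw [frontier_eq_closure_inter_closure]
        refine ⟨subset_closure (hfB hx), ?_⟩
        have : x ∈ closure Bᶜ := fcc _ hx
        exact closure_mono (by rw [hCc]; exact subset_union_right) this
  · ext x
    simp only [mem_inter_iff, mem_empty_iff_false, iff_false, not_and]
    intro hx1 hx3
    have h1 : x ∈ closure (B \ C) := by
      refine closure_mono ?_ (fcc A hx1)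
      intro y hy
      exact ⟨hAcB hy, fun hyC => hy (hCsubA hyC)⟩
    have h2 : x ∈ closure (A \ C) := by
      refine closure_mono ?_ (fcc B hx3)
      intro y hy
      exact ⟨hBcA hy, fun hyC => hy (hCsubB hyC)⟩
    have : x ∈ closure (A \ C) ∩ closure (B \ C) := ⟨h2, h1⟩
    rw [hF3] at this
    exact this
end

section
/- Let φ: F → G be a simple fold with F = F₁ ∪ F₂ ∪ F₃ and Gᵢ = φ(Fᵢ). Suppose G is connected and ∂G₁ ≠ ∅ ≠ ∂G₃. Then there is a connected component C of F such that φ(C) meets both ∂G₁ and ∂G₃; moreover for any such component, φ(C) = G. -/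
open Set Topology

/-!
Over a point of `∂G₁` the fold has a sheet in `F₃`, and near `∂G₁` the space `G` lies inside
`G₃`. So if a clopen connected `C ⊆ F` has an `F₃`-sheet over `y ∈ ∂G₁`, then `φ(C)` is a
neighbourhood of `y`; if it has none, the component `P` of `G₂` through `y` is trapped: it lies
in `φ(C ∩ F₂)`, misses `φ(C ∩ F₃)` and hence `∂G₃`, and `φ(C) ∩ W = P` for an open `W ⊇ P`, so
the connected set `φ(C)` equals `P` and misses `∂G₃`. Away from `∂G₁ ∪ ∂G₃`, `φ(C)` is open
because each `φ|Fᵢ` is an embedding. Hence a component meeting both frontiers maps onto an open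
and closed, thus full, subset of `G`. Such a component exists because the component of `G₃`
through a point of `∂G₁` must reach `∂G₃`, and it lifts to a connected subset of `F₃`.
-/

section Components

variable {X : Type*} [TopologicalSpace X]

theorem IsGraphSpace.isClopen_connectedComponent [T2Space X] (hX : IsGraphSpace X) (x : X) :
    IsClopen (connectedComponent x) := by
  obtain ⟨n, f, hf, hcov, -⟩ := hX
  have hcompl : (connectedComponent x)ᶜ =
      ⋃ i ∈ {i | Disjoint (range (f i)) (connectedComponent x)}, range (f i) := by
    ext z
    simp only [mem_compl_iff, mem_iUnion, mem_ofPred_eq, exists_prop]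
    constructor
    · intro hz
      obtain ⟨i, hi⟩ := mem_iUnion.1 (hcov.symm ▸ mem_univ z : z ∈ ⋃ i, range (f i))
      refine ⟨i, disjoint_left.2 fun w hw hwx => hz ?_, hi⟩
      rw [connectedComponent_eq hwx]
      exact (isPreconnected_range (hf i).1).subset_connectedComponent hw hi
    · rintro ⟨i, hdisj, hi⟩
      exact disjoint_left.1 hdisj hi
  refine ⟨isClosed_connectedComponent, ?_⟩
  rw [← isClosed_compl_iff, hcompl]
  exact (toFinite _).isClosed_biUnion fun i _ => (isCompact_range (hf i).1).isClosed

variable {A : Set X}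

theorem IsClosed.isClosed_connectedComponentIn (hA : IsClosed A) (x : X) :
    IsClosed (connectedComponentIn A x) := by
  by_cases hx : x ∈ A
  · rw [connectedComponentIn_eq_image hx]
    exact hA.isClosedMap_subtype_val _ isClosed_connectedComponent
  · rw [connectedComponentIn_eq_empty hx]
    exact isClosed_empty

theorem IsClosed.exists_isOpen_connectedComponentIn_eq (hA : IsClosed A)
    (hfin : {C : Set X | ∃ y ∈ A, C = connectedComponentIn A y}.Finite) {x : X} (hx : x ∈ A) :
    ∃ U, IsOpen U ∧ connectedComponentIn A x = U ∩ A := by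
  set others := {C : Set X | ∃ y ∈ A, C = connectedComponentIn A y} ∩ {C | x ∉ C}
  have hclosed : IsClosed (⋃₀ others) := by
    rw [sUnion_eq_biUnion]
    refine (hfin.subset inter_subset_left).isClosed_biUnion ?_
    rintro _ ⟨⟨y, -, rfl⟩, -⟩
    exact hA.isClosed_connectedComponentIn y
  refine ⟨(⋃₀ others)ᶜ, hclosed.isOpen_compl, subset_antisymm ?_ ?_⟩
  · intro z hz
    refine ⟨?_, connectedComponentIn_subset _ _ hz⟩
    rintro ⟨_, ⟨⟨y, -, rfl⟩, hxy⟩, hzy⟩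
    rw [connectedComponentIn_eq hzy, ← connectedComponentIn_eq hz] at hxy
    exact hxy (mem_connectedComponentIn hx)
  · rintro z ⟨hz, hzA⟩
    by_contra hzx
    refine hz ⟨connectedComponentIn A z, ⟨⟨z, hzA, rfl⟩, fun hxz => hzx ?_⟩,
      mem_connectedComponentIn hzA⟩
    rw [← connectedComponentIn_eq hxz]
    exact mem_connectedComponentIn hzA

theorem IsClosed.connectedComponentIn_inter_frontier_nonempty [PreconnectedSpace X]
    (hA : IsClosed A) (hfin : {C : Set X | ∃ y ∈ A, C = connectedComponentIn A y}.Finite)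
    (hfr : (frontier A).Nonempty) {x : X} (hx : x ∈ A) :
    (connectedComponentIn A x ∩ frontier A).Nonempty := by
  by_contra hR
  obtain ⟨U, hU, hRU⟩ := hA.exists_isOpen_connectedComponentIn_eq hfin hx
  have hRint : connectedComponentIn A x = U ∩ interior A := by
    refine subset_antisymm (fun z hz => ⟨(hRU ▸ hz).1, ?_⟩)
      fun z hz => hRU ▸ ⟨hz.1, interior_subset hz.2⟩
    by_contra hzi
    exact hR ⟨z, hz, subset_closure (connectedComponentIn_subset _ _ hz), hzi⟩
  have hRuniv : connectedComponentIn A x = univ :=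
    IsClopen.eq_univ ⟨hA.isClosed_connectedComponentIn x, hRint ▸ hU.inter isOpen_interior⟩
      ⟨x, mem_connectedComponentIn hx⟩
  have hAuniv : A = univ := eq_univ_of_univ_subset (hRuniv ▸ connectedComponentIn_subset A x)
  obtain ⟨z, hz⟩ := hfr
  rw [hAuniv, frontier_univ] at hz
  exact hz

theorem IsPreconnected.subset_of_inter_subset {s t u : Set X} (hs : IsPreconnected s)
    (ht : IsClosed t) (hu : IsOpen u) (htu : t ⊆ u) (hsu : s ∩ u ⊆ t) (hst : (s ∩ t).Nonempty) :
    s ⊆ t := by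
  rcases isPreconnected_iff_subset_of_disjoint.1 hs u tᶜ hu ht.isOpen_compl
    (fun z _ => (em (z ∈ t)).imp (@htu z) id)
    (eq_empty_of_forall_notMem fun z ⟨hzs, hzu, hzt⟩ => hzt (hsu ⟨hzs, hzu⟩)) with hsu' | hst'
  · exact fun z hz => hsu ⟨hz, hsu' hz⟩
  · obtain ⟨z, hzs, hzt⟩ := hst
    exact absurd hzt (hst' hzs)

end Components

theorem image_inter_eq_inter_image {α β : Type*} {φ : α → β} {A C : Set α} {s : Set β}
    (hs : ∀ a ∈ A, φ a ∈ s ↔ a ∈ C) :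
    φ '' (C ∩ A) = s ∩ φ '' A := by
  ext y
  constructor
  · rintro ⟨a, ⟨haC, haA⟩, rfl⟩
    exact ⟨(hs a haA).2 haC, a, haA, rfl⟩
  · rintro ⟨hy, a, haA, rfl⟩
    exact ⟨a, ⟨(hs a haA).1 hy, haA⟩, rfl⟩

section Embedding

variable {F G : Type*} [TopologicalSpace F] [TopologicalSpace G] {φ : F → G} {A C : Set F}

theorem exists_isOpen_image_inter_eq (hφ : IsInducing (A.domRestrict φ)) (hC : IsOpen C) :
    ∃ U, IsOpen U ∧ φ '' (C ∩ A) = U ∩ φ '' A := by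
  obtain ⟨U, hU, hpre⟩ := hφ.isOpen_iff.1 (hC.preimage continuous_subtype_val)
  exact ⟨U, hU, image_inter_eq_inter_image fun a ha => Set.ext_iff.1 hpre ⟨a, ha⟩⟩

theorem isClosed_image_inter (hφ : IsInducing (A.domRestrict φ)) (hA : IsClosed (φ '' A))
    (hC : IsClosed C) : IsClosed (φ '' (C ∩ A)) := by
  obtain ⟨K, hK, hpre⟩ := hφ.isClosed_iff.1 (hC.preimage continuous_subtype_val)
  rw [image_inter_eq_inter_image (C := C) fun a ha => Set.ext_iff.1 hpre ⟨a, ha⟩]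
  exact hK.inter hA

theorem mem_interior_image_of_mem_interior (hφ : IsInducing (A.domRestrict φ)) (hC : IsOpen C)
    {y : G} (hyC : y ∈ φ '' (C ∩ A)) (hyA : y ∈ interior (φ '' A)) :
    y ∈ interior (φ '' C) := by
  obtain ⟨U, hU, hCA⟩ := exists_isOpen_image_inter_eq hφ hC
  have hy : y ∈ interior (U ∩ φ '' A) := by
    rw [interior_inter, hU.interior_eq]
    exact ⟨(hCA ▸ hyC).1, hyA⟩
  exact interior_mono (hCA ▸ image_mono inter_subset_left) hy

theorem IsPreconnected.preimage_inter {P : Set G} (hP : IsPreconnected P)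
    (hφ : IsInducing (A.domRestrict φ)) (hPA : P ⊆ φ '' A) :
    IsPreconnected (A ∩ φ ⁻¹' P) := by
  have hlift : IsPreconnected (A.domRestrict φ ⁻¹' P) := by
    rw [← hφ.isPreconnected_image, image_preimage_eq_of_subset (by rwa [range_domRestrict])]
    exact hP
  rw [← Subtype.image_preimage_coe A (φ ⁻¹' P)]
  exact IsInducing.subtypeVal.isPreconnected_image.2 hlift

theorem IsPreconnected.subset_image_inter {P : Set G} (hP : IsPreconnected P)
    (hφ : IsInducing (A.domRestrict φ)) (hC : IsClopen C) (hPA : P ⊆ φ '' A)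
    (hne : (P ∩ φ '' (C ∩ A)).Nonempty) : P ⊆ φ '' (C ∩ A) := by
  obtain ⟨_, hyP, a, ⟨haC, haA⟩, rfl⟩ := hne
  have hsub := (hP.preimage_inter hφ hPA).subset_isClopen hC ⟨a, ⟨haA, hyP⟩, haC⟩
  intro z hz
  obtain ⟨b, hbA, rfl⟩ := hPA hz
  exact ⟨b, ⟨hsub ⟨hbA, hz⟩, hbA⟩, rfl⟩

end Embedding

section Fold

variable {F G : Type*} [TopologicalSpace F] [TopologicalSpace G] {φ : F → G} {F1 F2 F3 C : Set F}

theorem IsSimpleFold.symm (h : IsSimpleFold φ F1 F2 F3) : IsSimpleFold φ F3 F2 F1 := by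
  obtain ⟨hcont, hcovF, ⟨hn1, hn2, hn3⟩, ⟨hr1, hr2, hr3⟩, hcovG, hG2, hsep,
    ⟨hh1, hh2, hh3⟩, hfr1, hfr3, h13⟩ := h
  refine ⟨hcont, ?_, ⟨hn3, hn2, hn1⟩, ⟨hr3, hr2, hr1⟩, ?_, ?_, ?_, ⟨hh3, hh2, hh1⟩, ?_, ?_, ?_⟩
  · rw [← hcovF]
    ext
    simp only [mem_union]
    tauto
  · rwa [union_comm]
  · rwa [inter_comm]
  · rwa [inter_comm]
  · rwa [inter_comm]
  · rwa [inter_comm]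
  · rwa [inter_comm]

theorem IsSimpleFold.frontier_subset_interior (h : IsSimpleFold φ F1 F2 F3) :
    frontier (φ '' F1) ⊆ interior (φ '' F3) := by
  obtain ⟨-, -, -, -, hcov, hG2, hsep, -⟩ := h
  have h1c : (φ '' F1)ᶜ ⊆ φ '' F3 \ φ '' F2 := fun z hz =>
    ⟨(hcov.symm ▸ mem_univ z).resolve_left hz, fun hz2 => hz (hG2 ▸ hz2).1⟩
  have h3c : (φ '' F3)ᶜ ⊆ φ '' F1 \ φ '' F2 := fun z hz =>
    ⟨(hcov.symm ▸ mem_univ z).resolve_right hz, fun hz2 => hz (hG2 ▸ hz2).2⟩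
  intro y hy
  rw [frontier_eq_closure_inter_closure] at hy
  rw [interior_eq_compl_closure_compl]
  exact fun hy3 => hsep.subset ⟨closure_mono h3c hy3, closure_mono h1c hy.2⟩

theorem IsSimpleFold.mem_image_inter_of_mem_frontier (h : IsSimpleFold φ F1 F2 F3) {y : G}
    (hy : y ∈ frontier (φ '' F1)) (hyC : y ∈ φ '' C) (hy3 : y ∉ φ '' (C ∩ F3)) :
    y ∈ φ '' (C ∩ F2) := by
  obtain ⟨-, hcovF, -, -, -, -, -, ⟨hh1, -⟩, hfr1, -⟩ := h
  obtain ⟨a, haC, rfl⟩ := hyC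
  rcases (hcovF.symm ▸ mem_univ a : a ∈ F1 ∪ F2 ∪ F3) with (ha1 | ha2) | ha3
  · have hy12 : φ a ∈ φ '' (F1 ∩ F2) := hfr1 ▸ hy
    obtain ⟨e, ⟨he1, he2⟩, hea⟩ := hy12
    obtain rfl := injOn_iff_injective.2 hh1.2.injective ha1 he1 hea.symm
    exact ⟨a, ⟨haC, he2⟩, rfl⟩
  · exact ⟨a, ⟨haC, ha2⟩, rfl⟩
  · exact absurd ⟨a, ⟨haC, ha3⟩, rfl⟩ hy3

theorem IsSimpleFold.disjoint_connectedComponentIn_image_inter (h : IsSimpleFold φ F1 F2 F3)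
    (hC : IsClopen C) {y : G} (hy2 : y ∈ φ '' F2) (hy3 : y ∉ φ '' (C ∩ F3)) :
    Disjoint (connectedComponentIn (φ '' F2) y) (φ '' (C ∩ F3)) := by
  obtain ⟨-, -, -, -, -, hG2, -, ⟨-, -, hh3⟩, -⟩ := h
  have hG23 : φ '' F2 ⊆ φ '' F3 := hG2 ▸ inter_subset_right
  refine disjoint_left.2 fun z hzP hz3 => hy3 ?_
  have hR := isPreconnected_connectedComponentIn.subset_image_inter hh3.2.isInducing hC
    (connectedComponentIn_subset _ _) ⟨z, connectedComponentIn_mono _ hG23 hzP, hz3⟩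
  exact hR (mem_connectedComponentIn (hG23 hy2))

theorem IsSimpleFold.disjoint_connectedComponentIn_frontier (h : IsSimpleFold φ F1 F2 F3)
    (hC : IsClopen C) {y : G} (hy2 : y ∈ φ '' (C ∩ F2)) (hy3 : y ∉ φ '' (C ∩ F3)) :
    Disjoint (connectedComponentIn (φ '' F2) y) (frontier (φ '' F3)) := by
  have hP3 := h.disjoint_connectedComponentIn_image_inter hC (image_mono inter_subset_right hy2) hy3
  obtain ⟨-, -, -, -, -, -, -, ⟨-, hh2, -⟩, -, hfr3, -⟩ := h
  have hP2 : connectedComponentIn (φ '' F2) y ⊆ φ '' (C ∩ F2) :=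
    isPreconnected_connectedComponentIn.subset_image_inter hh2.2.isInducing hC
      (connectedComponentIn_subset _ _)
      ⟨y, mem_connectedComponentIn (image_mono inter_subset_right hy2), hy2⟩
  refine disjoint_left.2 fun z hzP hz => ?_
  obtain ⟨b, ⟨hb2, hb3⟩, rfl⟩ := hfr3 ▸ hz
  obtain ⟨c, ⟨hcC, hc2⟩, hcb⟩ := hP2 hzP
  obtain rfl := injOn_iff_injective.2 hh2.2.injective hc2 hb2 hcb
  exact disjoint_left.1 hP3 hzP ⟨c, ⟨hcC, hb3⟩, rfl⟩

theorem IsSimpleFold.image_subset_connectedComponentIn (h : IsSimpleFold φ F1 F2 F3)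
    (hC : IsClopen C) (hCc : IsPreconnected C) {y : G} (hy2 : y ∈ φ '' (C ∩ F2))
    (hy3 : y ∉ φ '' (C ∩ F3)) : φ '' C ⊆ connectedComponentIn (φ '' F2) y := by
  have hPfr := h.disjoint_connectedComponentIn_frontier hC hy2 hy3
  have hyF2 : y ∈ φ '' F2 := image_mono inter_subset_right hy2
  have hP3 := h.disjoint_connectedComponentIn_image_inter hC hyF2 hy3
  obtain ⟨hcont, hcovF, -, ⟨-, hreg2, hreg3⟩, -, hG2, -, ⟨-, -, hh3⟩, -⟩ := h
  have hG21 : φ '' F2 ⊆ φ '' F1 := hG2 ▸ inter_subset_left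
  have hG23 : φ '' F2 ⊆ φ '' F3 := hG2 ▸ inter_subset_right
  set P := connectedComponentIn (φ '' F2) y
  -- `φ '' F1` and `φ '' F2` agree on `interior (φ '' F3)`, so `W` cuts `P` out of `φ '' C`.
  obtain ⟨U, hU, hPU⟩ : ∃ U, IsOpen U ∧ P = U ∩ φ '' F2 :=
    hreg2.1.exists_isOpen_connectedComponentIn_eq hreg2.2.1 hyF2
  set W := U ∩ interior (φ '' F3) ∩ (φ '' (C ∩ F3))ᶜ
  have hWo : IsOpen W := (hU.inter isOpen_interior).inter
    (isClosed_image_inter hh3.2.isInducing hreg3.1 hC.1).isOpen_compl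
  have hPW : P ⊆ W := by
    intro z hz
    have hz3 : z ∈ φ '' F3 := hG23 (connectedComponentIn_subset _ _ hz)
    exact ⟨⟨(hPU ▸ hz).1, (mem_interior_iff_notMem_frontier hz3).2 (disjoint_left.1 hPfr hz)⟩,
      disjoint_left.1 hP3 hz⟩
  have hWP : φ '' C ∩ W ⊆ P := by
    rintro _ ⟨⟨v, hvC, rfl⟩, ⟨hvU, hvi⟩, hv3⟩
    have hv1 : φ v ∈ φ '' F1 := by
      rcases (hcovF.symm ▸ mem_univ v : v ∈ F1 ∪ F2 ∪ F3) with (hv1 | hv2) | hv3'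
      · exact ⟨v, hv1, rfl⟩
      · exact hG21 ⟨v, hv2, rfl⟩
      · exact absurd ⟨v, ⟨hvC, hv3'⟩, rfl⟩ hv3
    exact hPU ▸ ⟨hvU, hG2 ▸ ⟨hv1, interior_subset hvi⟩⟩
  exact (hCc.image φ hcont.continuousOn).subset_of_inter_subset
    (hreg2.1.isClosed_connectedComponentIn y) hWo hPW hWP
    ⟨y, image_mono inter_subset_left hy2, mem_connectedComponentIn hyF2⟩

theorem IsSimpleFold.mem_interior_image_of_mem_frontier (h : IsSimpleFold φ F1 F2 F3)
    (hC : IsClopen C) (hCc : IsPreconnected C) (h3 : (φ '' C ∩ frontier (φ '' F3)).Nonempty)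
    {y : G} (hyC : y ∈ φ '' C) (hy : y ∈ frontier (φ '' F1)) : y ∈ interior (φ '' C) := by
  by_cases hy3 : y ∈ φ '' (C ∩ F3)
  · obtain ⟨-, -, -, -, -, -, -, ⟨-, -, hh3⟩, -⟩ := id h
    exact mem_interior_image_of_mem_interior hh3.2.isInducing hC.isOpen hy3
      (h.frontier_subset_interior hy)
  · have hy2 := h.mem_image_inter_of_mem_frontier hy hyC hy3
    obtain ⟨z, hzC, hz⟩ := h3
    exact absurd hz (disjoint_left.1 (h.disjoint_connectedComponentIn_frontier hC hy2 hy3)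
      (h.image_subset_connectedComponentIn hC hCc hy2 hy3 hzC))

theorem IsSimpleFold.isOpen_image (h : IsSimpleFold φ F1 F2 F3) (hC : IsClopen C)
    (hCc : IsPreconnected C) (h1 : (φ '' C ∩ frontier (φ '' F1)).Nonempty)
    (h3 : (φ '' C ∩ frontier (φ '' F3)).Nonempty) : IsOpen (φ '' C) := by
  obtain ⟨-, hcovF, -, -, -, hG2, -, ⟨hh1, hh2, hh3⟩, -⟩ := id h
  rw [← subset_interior_iff_isOpen]
  rintro _ ⟨x, hxC, rfl⟩
  by_cases hx1 : φ x ∈ frontier (φ '' F1)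
  · exact h.mem_interior_image_of_mem_frontier hC hCc h3 ⟨x, hxC, rfl⟩ hx1
  by_cases hx3 : φ x ∈ frontier (φ '' F3)
  · exact h.symm.mem_interior_image_of_mem_frontier hC hCc h1 ⟨x, hxC, rfl⟩ hx3
  have hint1 (hx : φ x ∈ φ '' F1) : φ x ∈ interior (φ '' F1) :=
    (mem_interior_iff_notMem_frontier hx).2 hx1
  have hint3 (hx : φ x ∈ φ '' F3) : φ x ∈ interior (φ '' F3) :=
    (mem_interior_iff_notMem_frontier hx).2 hx3
  rcases (hcovF.symm ▸ mem_univ x : x ∈ F1 ∪ F2 ∪ F3) with (hxF | hxF) | hxF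
  · exact mem_interior_image_of_mem_interior hh1.2.isInducing hC.isOpen ⟨x, ⟨hxC, hxF⟩, rfl⟩
      (hint1 ⟨x, hxF, rfl⟩)
  · have hx13 : φ x ∈ φ '' F1 ∩ φ '' F3 := hG2 ▸ ⟨x, hxF, rfl⟩
    refine mem_interior_image_of_mem_interior hh2.2.isInducing hC.isOpen ⟨x, ⟨hxC, hxF⟩, rfl⟩ ?_
    rw [hG2, interior_inter]
    exact ⟨hint1 hx13.1, hint3 hx13.2⟩
  · exact mem_interior_image_of_mem_interior hh3.2.isInducing hC.isOpen ⟨x, ⟨hxC, hxF⟩, rfl⟩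
      (hint3 ⟨x, hxF, rfl⟩)

theorem IsSimpleFold.exists_image_connectedComponent_meets_frontiers [PreconnectedSpace G]
    (h : IsSimpleFold φ F1 F2 F3) (h1 : (frontier (φ '' F1)).Nonempty)
    (h3 : (frontier (φ '' F3)).Nonempty) :
    ∃ x : F, (φ '' connectedComponent x ∩ frontier (φ '' F1)).Nonempty ∧
      (φ '' connectedComponent x ∩ frontier (φ '' F3)).Nonempty := by
  obtain ⟨p, hp⟩ := h1
  obtain ⟨c, hc3, rfl⟩ := interior_subset (h.frontier_subset_interior hp)
  obtain ⟨-, -, -, ⟨-, -, hreg3⟩, -, -, -, ⟨-, -, hh3⟩, -⟩ := h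
  obtain ⟨q, hqR, hq⟩ := hreg3.1.connectedComponentIn_inter_frontier_nonempty hreg3.2.1 h3
    ⟨c, hc3, rfl⟩
  have hR : F3 ∩ φ ⁻¹' connectedComponentIn (φ '' F3) (φ c) ⊆ connectedComponent c :=
    (isPreconnected_connectedComponentIn.preimage_inter hh3.2.isInducing
      (connectedComponentIn_subset _ _)).subset_connectedComponent
      ⟨hc3, mem_connectedComponentIn ⟨c, hc3, rfl⟩⟩
  obtain ⟨d, hd3, rfl⟩ := connectedComponentIn_subset _ _ hqR
  exact ⟨c, ⟨φ c, mem_image_of_mem φ mem_connectedComponent, hp⟩,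
    ⟨φ d, mem_image_of_mem φ (hR ⟨hd3, hqR⟩), hq⟩⟩

end Fold

theorem stmt5_general (F G : Type*) [TopologicalSpace F] [TopologicalSpace G]
    [CompactSpace F] [T2Space F] [T2Space G] [ConnectedSpace G]
    (hF : IsGraphSpace F)
    (φ : F → G) (F1 F2 F3 : Set F) (h : IsSimpleFold φ F1 F2 F3)
    (h1 : (frontier (φ '' F1)).Nonempty) (h3 : (frontier (φ '' F3)).Nonempty) :
    (∃ x : F, (φ '' connectedComponent x ∩ frontier (φ '' F1)).Nonempty ∧
      (φ '' connectedComponent x ∩ frontier (φ '' F3)).Nonempty) ∧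
    ∀ x : F, (φ '' connectedComponent x ∩ frontier (φ '' F1)).Nonempty →
      (φ '' connectedComponent x ∩ frontier (φ '' F3)).Nonempty →
      φ '' connectedComponent x = Set.univ := by
  refine ⟨h.exists_image_connectedComponent_meets_frontiers h1 h3, fun x hx1 hx3 => ?_⟩
  have hclosed : IsClosed (φ '' connectedComponent x) :=
    (isClosed_connectedComponent.isCompact.image h.1).isClosed
  have hopen : IsOpen (φ '' connectedComponent x) :=
    h.isOpen_image (hF.isClopen_connectedComponent x) isPreconnected_connectedComponent hx1 hx3
  exact IsClopen.eq_univ ⟨hclosed, hopen⟩ (hx1.mono inter_subset_left)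

/-- some component of F projects onto all of G. -/
theorem stmt5 (F G : Type*) [TopologicalSpace F] [TopologicalSpace G]
    [CompactSpace F] [T2Space F] [CompactSpace G] [T2Space G] [ConnectedSpace G]
    (hF : IsGraphSpace F) (hG : IsGraphSpace G)
    (φ : F → G) (F1 F2 F3 : Set F) (h : IsSimpleFold φ F1 F2 F3)
    (h1 : (frontier (φ '' F1)).Nonempty) (h3 : (frontier (φ '' F3)).Nonempty) :
    (∃ x : F, (φ '' connectedComponent x ∩ frontier (φ '' F1)).Nonempty ∧
      (φ '' connectedComponent x ∩ frontier (φ '' F3)).Nonempty) ∧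
    ∀ x : F, (φ '' connectedComponent x ∩ frontier (φ '' F1)).Nonempty →
      (φ '' connectedComponent x ∩ frontier (φ '' F3)).Nonempty →
      φ '' connectedComponent x = Set.univ :=
  stmt5_general F G hF φ F1 F2 F3 h h1 h3
end

section
/- Let G be a connected graph, A, A' ⊆ G non-empty regular sets, and B ⊆ ∂A ∩ ∂A'. Suppose A and A' each have consistent complement relative to B, and there is a neighborhood V of B with A ∩ V = A' ∩ V. Then σ_B(A) = σ_B(A'). Moreover, every component C of G \ A with closure(C) ∩ B ≠ ∅ is also a component of G \ A'. -/
open Set Topology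

/-!
Let `C` be a component of `G \ A` whose closure meets `B`; by consistency `∂C ⊆ B`. Near a point
`b ∈ ∂C` the sets `A` and `A'` agree, so `C` contains points outside `A'`, and the component `P` of
`G \ A'` through such a point is contained in `C` and has a frontier point in `B`: a connected
neighbourhood of `b` inside `V` crosses `∂P`, and `∂P ∩ V ⊆ A' ∩ V = A ∩ V` misses `C`. Consistency
of `A'` gives `∂P ⊆ B`, so `P` is clopen in the connected set `C`, whence `C = P`.
For the sides: a component `D` of `G \ B` meeting `A` but not `A'` would be a component of
`G \ A'` with `∂D ⊆ B`, and the same argument with `A` and `A'` exchanged shows that `D` misses `A`.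
-/

theorem closure_connectedComponentIn_inter_subset {X : Type*} [TopologicalSpace X] (F : Set X)
    (x : X) : closure (connectedComponentIn F x) ∩ F ⊆ connectedComponentIn F x := by
  by_cases hx : x ∈ F
  · exact (isPreconnected_connectedComponentIn.subset_closure
      (subset_inter subset_closure (connectedComponentIn_subset F x)) inter_subset_left)
      |>.subset_connectedComponentIn ⟨subset_closure (mem_connectedComponentIn hx), hx⟩
        inter_subset_right
  · simp [connectedComponentIn_eq_empty hx]

theorem IsOpen.closure_inter_compl_subset {X : Type*} [TopologicalSpace X] {C B : Set X}
    (hC : IsOpen C) (hfr : frontier C ⊆ B) : closure C ∩ Bᶜ ⊆ C := fun z hz =>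
  by_contra fun hzC => hz.2 (hfr ⟨hz.1, by rwa [hC.interior_eq]⟩)

theorem locallyConnectedSpace_of_isClosed_cover {X ι : Type*} [TopologicalSpace X] [Finite ι]
    {K : ι → Set X} (hK : ∀ i, IsClosed (K i)) (hcover : ⋃ i, K i = univ)
    (hlc : ∀ i, LocallyConnectedSpace (K i)) : LocallyConnectedSpace X := by
  rw [locallyConnectedSpace_iff_connected_subsets]
  intro x U hU
  have piece : ∀ i, ∃ W ⊆ U, x ∈ W ∧ IsPreconnected W ∧ ∀ᶠ y in 𝓝 x, y ∈ K i → y ∈ W := by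
    intro i
    by_cases hx : x ∈ K i
    · obtain ⟨W, hW, hWpre, hWU⟩ := locallyConnectedSpace_iff_connected_subsets.1 (hlc i)
        ⟨x, hx⟩ (Subtype.val ⁻¹' U) (continuous_subtype_val.continuousAt.preimage_mem_nhds hU)
      refine ⟨Subtype.val '' W, image_subset_iff.2 hWU, ⟨_, mem_of_mem_nhds hW, rfl⟩,
        hWpre.image _ continuous_subtype_val.continuousOn, ?_⟩
      rw [← mem_nhdsWithin_iff_eventually]
      exact map_nhds_subtype_val (s := K i) ⟨x, hx⟩ ▸ Filter.image_mem_map hW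
    · exact ⟨{x}, singleton_subset_iff.2 (mem_of_mem_nhds hU), rfl, isPreconnected_singleton,
        Filter.eventually_of_mem ((hK i).isOpen_compl.mem_nhds hx) fun y hy hyK => absurd hyK hy⟩
  choose W hWU hxW hWpre hW using piece
  refine ⟨⋃ i, W i, ?_, isPreconnected_iUnion ⟨x, mem_iInter.2 hxW⟩ hWpre, iUnion_subset hWU⟩
  filter_upwards [Filter.eventually_all.2 hW] with y hy
  obtain ⟨i, hi⟩ := mem_iUnion.1 (hcover.symm ▸ mem_univ y : y ∈ ⋃ i, K i)
  exact mem_iUnion.2 ⟨i, hy i hi⟩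

theorem IsGraphSpace.locallyConnectedSpace {G : Type*} [TopologicalSpace G] [T2Space G]
    (hG : IsGraphSpace G) : LocallyConnectedSpace G := by
  obtain ⟨n, f, hf, hcover, -⟩ := hG
  have hemb : ∀ i, IsClosedEmbedding (f i) := fun i => (hf i).1.isClosedEmbedding (hf i).2
  have : LocallyPathConnectedSpace unitInterval := (convex_Icc (0 : ℝ) 1).locallyPathConnectedSpace
  exact locallyConnectedSpace_of_isClosed_cover (fun i => (hemb i).isClosed_range) hcover
    fun i => (hemb i).isEmbedding.toHomeomorph.symm.locallyConnectedSpace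

section Complements

variable {X : Type*} [TopologicalSpace X] [LocallyConnectedSpace X] {A A' B V : Set X}

theorem connectedComponentIn_compl_subset_compl_of_frontier_subset [PreconnectedSpace X]
    (hA : IsClosed A) (hA' : IsClosed A') (hAne : A.Nonempty) (hBA : B ⊆ A) (hBA' : B ⊆ A')
    (hV : IsOpen V) (hBV : B ⊆ V) (hAV : A ∩ V = A' ∩ V) (hcc' : ConsistentComplement A' B)
    {x : X} (hx : x ∉ A) (hfr : frontier (connectedComponentIn Aᶜ x) ⊆ B) :
    connectedComponentIn Aᶜ x ⊆ A'ᶜ := by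
  set C := connectedComponentIn Aᶜ x
  have hCo : IsOpen C := hA.isOpen_compl.connectedComponentIn
  have hCA : C ⊆ Aᶜ := connectedComponentIn_subset _ _
  have hclC : closure C ∩ Bᶜ ⊆ C := hCo.closure_inter_compl_subset hfr
  obtain ⟨b, hb⟩ : (frontier C).Nonempty := nonempty_frontier_iff.2
    ⟨⟨x, mem_connectedComponentIn hx⟩, fun h => hAne.elim fun a ha => hCA (h ▸ mem_univ a) ha⟩
  have hbB : b ∈ B := hfr hb
  set N := connectedComponentIn V b
  have hNV : N ⊆ V := connectedComponentIn_subset _ _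
  have hbN : b ∈ N := mem_connectedComponentIn (hBV hbB)
  obtain ⟨c, hcN, hcC⟩ :=
    mem_closure_iff.1 (frontier_subset_closure hb) N hV.connectedComponentIn hbN
  have hcA' : c ∉ A' := fun hcA' => hCA hcC (show c ∈ A ∩ V from hAV ▸ ⟨hcA', hNV hcN⟩).1
  set P := connectedComponentIn A'ᶜ c
  have hPo : IsOpen P := hA'.isOpen_compl.connectedComponentIn
  have hcP : c ∈ P := mem_connectedComponentIn hcA'
  have hPA' : P ⊆ A'ᶜ := connectedComponentIn_subset _ _
  have hPC : P ⊆ C := isPreconnected_connectedComponentIn.subset_of_closure_inter_subset hCo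
    ⟨c, hcP, hcC⟩ fun z hz => hclC ⟨hz.1, fun hzB => hPA' hz.2 (hBA' hzB)⟩
  obtain ⟨w, ⟨hwP, hwN⟩, hwnP⟩ : ((closure P ∩ N) \ P).Nonempty := by
    by_contra h
    rw [not_nonempty_iff_eq_empty, sdiff_eq_empty] at h
    exact hPA' (isPreconnected_connectedComponentIn.subset_of_closure_inter_subset hPo
      ⟨c, hcN, hcP⟩ h hbN) (hBA' hbB)
  have hwA' : w ∈ A' := by_contra fun hwA' =>
    hwnP (closure_connectedComponentIn_inter_subset _ _ ⟨hwP, hwA'⟩)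
  have hwA : w ∈ A := (show w ∈ A ∩ V from hAV ▸ ⟨hwA', hNV hwN⟩).1
  have hwB : w ∈ B := by_contra fun hwB => hCA (hclC ⟨closure_mono hPC hwP, hwB⟩) hwA
  have hPfr : frontier P ⊆ B := (hcc' c hcA').resolve_right <| nonempty_iff_ne_empty.1
    ⟨w, by rw [hPo.frontier_eq]; exact ⟨hwP, hwnP⟩, hwB⟩
  have hCP : C ⊆ P := isPreconnected_connectedComponentIn.subset_of_closure_inter_subset hPo
    ⟨c, hcC, hcP⟩ fun z hz =>
      hPo.closure_inter_compl_subset hPfr ⟨hz.1, fun hzB => hCA hz.2 (hBA hzB)⟩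
  exact hCP.trans hPA'

theorem connectedComponentIn_compl_eq_of_frontier_subset [PreconnectedSpace X]
    (hA : IsClosed A) (hA' : IsClosed A') (hAne : A.Nonempty) (hBA : B ⊆ A) (hBA' : B ⊆ A')
    (hV : IsOpen V) (hBV : B ⊆ V) (hAV : A ∩ V = A' ∩ V) (hcc' : ConsistentComplement A' B)
    {x : X} (hx : x ∉ A) (hfr : frontier (connectedComponentIn Aᶜ x) ⊆ B) :
    connectedComponentIn Aᶜ x = connectedComponentIn A'ᶜ x := by
  have hCA' := connectedComponentIn_compl_subset_compl_of_frontier_subset hA hA' hAne hBA hBA'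
    hV hBV hAV hcc' hx hfr
  have hxC : x ∈ connectedComponentIn Aᶜ x := mem_connectedComponentIn hx
  have hCo : IsOpen (connectedComponentIn Aᶜ x) := hA.isOpen_compl.connectedComponentIn
  exact (isPreconnected_connectedComponentIn.subset_connectedComponentIn hxC hCA').antisymm
    (isPreconnected_connectedComponentIn.subset_of_closure_inter_subset hCo
      ⟨x, mem_connectedComponentIn (hCA' hxC), hxC⟩ fun z hz =>
        hCo.closure_inter_compl_subset hfr
          ⟨hz.1, fun hzB => connectedComponentIn_subset _ _ hz.2 (hBA' hzB)⟩)

theorem sideOf_subset_sideOf [PreconnectedSpace X] (hA : IsClosed A) (hA' : IsClosed A')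
    (hA'ne : A'.Nonempty) (hBA : B ⊆ A) (hBA' : B ⊆ A') (hB : IsClosed B) (hV : IsOpen V)
    (hBV : B ⊆ V) (hAV : A ∩ V = A' ∩ V) (hcc : ConsistentComplement A B) :
    sideOf B A ⊆ sideOf B A' := by
  refine closure_mono <| iUnion₂_mono' fun x ⟨hxB, hxA⟩ => ⟨x, ⟨hxB, ?_⟩, subset_rfl⟩
  obtain ⟨y, hyD, hyA⟩ := hxA
  have hD := connectedComponentIn_eq hyD
  rw [hD]
  rw [hD] at hyD
  by_contra hDA'
  have hDA' : connectedComponentIn Bᶜ y ⊆ A'ᶜ := fun z hzD hzA' => hDA' ⟨z, hzD, hzA'⟩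
  have hyA' : y ∉ A' := hDA' hyD
  have hDP : connectedComponentIn Bᶜ y = connectedComponentIn A'ᶜ y :=
    (isPreconnected_connectedComponentIn.subset_connectedComponentIn hyD hDA').antisymm
      (isPreconnected_connectedComponentIn.subset_connectedComponentIn
        (mem_connectedComponentIn hyA') ((connectedComponentIn_subset _ _).trans
          (compl_subset_compl.2 hBA')))
  have hDo : IsOpen (connectedComponentIn Bᶜ y) := hB.isOpen_compl.connectedComponentIn
  have hPfr : frontier (connectedComponentIn A'ᶜ y) ⊆ B := by
    rw [← hDP, hDo.frontier_eq]
    exact fun z hz => by_contra fun hzB =>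
      hz.2 (closure_connectedComponentIn_inter_subset _ _ ⟨hz.1, hzB⟩)
  exact connectedComponentIn_compl_subset_compl_of_frontier_subset hA' hA hA'ne hBA' hBA hV hBV
    hAV.symm hcc hyA' hPfr (hDP ▸ hyD) hyA

end Complements

theorem stmt6_general (G : Type*) [TopologicalSpace G] [T2Space G]
    [ConnectedSpace G] (hG : IsGraphSpace G)
    (A A' B : Set G)
    (hA : IsRegularSet A) (hA' : IsRegularSet A')
    (hAne : A.Nonempty) (hA'ne : A'.Nonempty)
    (hB : B ⊆ frontier A ∩ frontier A') (hBfin : B.Finite)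
    (hcc : ConsistentComplement A B) (hcc' : ConsistentComplement A' B)
    (hV : ∃ V : Set G, IsOpen V ∧ B ⊆ V ∧ A ∩ V = A' ∩ V) :
    sideOf B A = sideOf B A' ∧
    ∀ x, x ∉ A → (closure (connectedComponentIn Aᶜ x) ∩ B).Nonempty →
      connectedComponentIn Aᶜ x = connectedComponentIn A'ᶜ x := by
  have := hG.locallyConnectedSpace
  obtain ⟨V, hVo, hBV, hAV⟩ := hV
  have hBA : B ⊆ A := fun b hb => hA.1.frontier_subset (hB hb).1
  have hBA' : B ⊆ A' := fun b hb => hA'.1.frontier_subset (hB hb).2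
  refine ⟨(sideOf_subset_sideOf hA.1 hA'.1 hA'ne hBA hBA' hBfin.isClosed hVo hBV hAV hcc).antisymm
    (sideOf_subset_sideOf hA'.1 hA.1 hAne hBA' hBA hBfin.isClosed hVo hBV hAV.symm hcc'),
    fun x hx ⟨b, hbC, hbB⟩ => ?_⟩
  have hCo : IsOpen (connectedComponentIn Aᶜ x) := hA.1.isOpen_compl.connectedComponentIn
  have hbfr : b ∈ frontier (connectedComponentIn Aᶜ x) := by
    rw [hCo.frontier_eq]
    exact ⟨hbC, fun hbC' => connectedComponentIn_subset _ _ hbC' (hBA hbB)⟩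
  have hfr := (hcc x hx).resolve_right (nonempty_iff_ne_empty.1 ⟨b, hbfr, hbB⟩)
  exact connectedComponentIn_compl_eq_of_frontier_subset hA.1 hA'.1 hAne hBA hBA' hVo hBV hAV
    hcc' hx hfr

/-- sides agree for regular sets with consistent complements agreeing near B. -/
theorem stmt6 (G : Type*) [TopologicalSpace G] [CompactSpace G] [T2Space G]
    [ConnectedSpace G] (hG : IsGraphSpace G)
    (A A' B : Set G)
    (hA : IsRegularSet A) (hA' : IsRegularSet A')
    (hAne : A.Nonempty) (hA'ne : A'.Nonempty)
    (hB : B ⊆ frontier A ∩ frontier A') (hBfin : B.Finite)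
    (hcc : ConsistentComplement A B) (hcc' : ConsistentComplement A' B)
    (hV : ∃ V : Set G, IsOpen V ∧ B ⊆ V ∧ A ∩ V = A' ∩ V) :
    sideOf B A = sideOf B A' ∧
    ∀ x, x ∉ A → (closure (connectedComponentIn Aᶜ x) ∩ B).Nonempty →
      connectedComponentIn Aᶜ x = connectedComponentIn A'ᶜ x :=
  stmt6_general G hG A A' B hA hA' hAne hA'ne hB hBfin hcc hcc' hV
end

section
/- Let G be a connected graph, A ⊆ G a regular non-empty set, and B₁, B₂ ⊆ ∂A with B₁ ∪ B₂ = ∂A and B₁ ∩ B₂ = ∅. Suppose A has consistent complement relative to B₁ and to B₂. Then the sets G₁ = σ_{B₁}(A), G₂ = A, G₃ = σ_{B₂}(A) satisfy: (i) each Gᵢ is regular and non-empty; (ii) G₁ ∪ G₃ = G and G₂ = G₁ ∩ G₃; (iii) closure(G₁ \ G₂) ∩ closure(G₃ \ G₂) = ∅. -/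
open Set Topology

/-!
Everything is pulled back along the arcs of `G`. A closed set with finitely many components meets
each arc in finitely many closed intervals, so `∂A` is finite and `G \ A` has finitely many
components; and `G`, a quotient of finitely many copies of `[0,1]`, is locally connected.
Each component `C` of `G \ A` is then open with `∅ ≠ ∂C ⊆ ∂A`, and consistency relative to `B₁`
sorts these components into those with `∂C ⊆ B₁` and those with `∂C ⊆ B₂`. The former are whole
components of `G \ B₁` missing `A`; the latter, together with `∂C ⊆ A`, lie in components of
`G \ B₁` meeting `A`. As `A \ B₁` is dense in `A`, this gives `σ_{B₁}(A) = A ∪ ⋃ {C̄ | ∂C ⊆ B₂}`,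
and symmetrically for `B₂`. Closures of components of the two kinds are disjoint because
`B₁ ∩ B₂ = ∅`, and (i)–(iii) follow.
-/

def connectedComponentsIn {X : Type*} [TopologicalSpace X] (F : Set X) : Set (Set X) :=
  {C | ∃ x ∈ F, C = connectedComponentIn F x}

section Components

variable {X : Type*} [TopologicalSpace X]

theorem mem_connectedComponentIn_of_mem_closure {F : Set X} {x y : X}
    (hy : y ∈ closure (connectedComponentIn F x)) (hyF : y ∈ F) :
    y ∈ connectedComponentIn F x := by
  obtain ⟨z, hz⟩ := closure_nonempty_iff.mp ⟨y, hy⟩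
  have hjoin : IsPreconnected (connectedComponentIn F x ∪ {y}) :=
    isPreconnected_connectedComponentIn.subset_closure subset_union_left
      (union_subset subset_closure (singleton_subset_iff.mpr hy))
  rw [connectedComponentIn_eq hz]
  exact hjoin.subset_connectedComponentIn (Or.inl hz)
    (union_subset (connectedComponentIn_subset _ _) (singleton_subset_iff.mpr hyF)) (Or.inr rfl)

theorem IsClosed.connectedComponentIn {F : Set X} (hF : IsClosed F) (x : X) :
    IsClosed (connectedComponentIn F x) :=
  isClosed_of_closure_subset fun _ hy =>
    mem_connectedComponentIn_of_mem_closure hy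
      (hF.closure_subset_iff.mpr (connectedComponentIn_subset F x) hy)

theorem connectedComponentIn_eq_of_disjoint_frontier {F C : Set X} (hCpre : IsPreconnected C)
    (hCopen : IsOpen C) (hCF : C ⊆ F) (hfr : Disjoint (frontier C) F) {y : X} (hy : y ∈ C) :
    connectedComponentIn F y = C := by
  refine subset_antisymm (fun z hz => ?_) (hCpre.subset_connectedComponentIn hy hCF)
  by_contra hzC
  have hcover : connectedComponentIn F y ⊆ C ∪ (closure C)ᶜ := fun w hw =>
    or_iff_not_imp_left.mpr fun hwC hwcl => hfr.notMem_of_mem_left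
      (hCopen.frontier_eq ▸ ⟨hwcl, hwC⟩) (connectedComponentIn_subset F y hw)
  obtain ⟨w, -, hwC, hwcl⟩ := isPreconnected_connectedComponentIn C (closure C)ᶜ hCopen
    isClosed_closure.isOpen_compl hcover ⟨y, mem_connectedComponentIn (hCF hy), hy⟩
    ⟨z, hz, (hcover hz).resolve_left hzC⟩
  exact hwcl (subset_closure hwC)

theorem connectedComponentsIn_finite_of_cover {T : Set X} {P : Set (Set X)} (hP : P.Finite)
    (hcover : T ⊆ ⋃₀ P) (hsub : ∀ p ∈ P, p ⊆ T ∧ IsPreconnected p) :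
    (connectedComponentsIn T).Finite := by
  have hcomps : connectedComponentsIn T ⊆ ⋃ p ∈ P, connectedComponentIn T '' p := by
    rintro C ⟨x, hx, rfl⟩
    obtain ⟨p, hp, hxp⟩ := hcover hx
    exact mem_biUnion hp ⟨x, hxp, rfl⟩
  refine (hP.biUnion fun p hp => Subsingleton.finite ?_).subset hcomps
  rintro _ ⟨a, ha, rfl⟩ _ ⟨b, hb, rfl⟩
  exact connectedComponentIn_eq ((hsub p hp).2.subset_connectedComponentIn ha (hsub p hp).1 hb)

theorem IsPreconnected.mem_closure_sdiff_finite [T1Space X] {K B : Set X} (hK : IsPreconnected K)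
    (hKnt : K.Nontrivial) (hB : B.Finite) {b : X} (hb : b ∈ K) : b ∈ closure (K \ B) := by
  have : PreconnectedSpace K := Subtype.preconnectedSpace hK
  have : ConnectedSpace K := { toPreconnectedSpace := ‹_›, toNonempty := ⟨⟨b, hb⟩⟩ }
  have : Nontrivial K := nontrivial_coe_sort.mpr hKnt
  have hdense : Dense ((Subtype.val : K → X) ⁻¹' B)ᶜ := by
    rw [compl_eq_univ_sdiff]
    exact dense_univ.sdiff_finite (hB.preimage Subtype.val_injective.injOn)
  have hb' := closure_subtype.mp (hdense.closure_eq ▸ mem_univ (⟨b, hb⟩ : K))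
  exact closure_mono (by rintro _ ⟨⟨z, hz⟩, hzB, rfl⟩; exact ⟨hz, hzB⟩) hb'

theorem closure_sdiff_finite_eq [T1Space X] {A B : Set X} (hA : IsClosed A)
    (hnt : ∀ x ∈ A, (connectedComponentIn A x).Nontrivial) (hB : B.Finite) :
    closure (A \ B) = A :=
  subset_antisymm (closure_minimal sdiff_subset hA) fun b hb =>
    closure_mono (sdiff_subset_sdiff_left (connectedComponentIn_subset A b))
      (isPreconnected_connectedComponentIn.mem_closure_sdiff_finite (hnt b hb) hB
        (mem_connectedComponentIn hb))

end Components

section Order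

variable {α : Type*} [CompleteLinearOrder α] [TopologicalSpace α] [OrderTopology α]

theorem frontier_finite_of_connectedComponentsIn_finite {T : Set α} (hT : IsClosed T)
    (hfin : (connectedComponentsIn T).Finite) : (frontier T).Finite := by
  refine (hfin.biUnion fun P _ => toFinite {sInf P, sSup P}).subset fun x hx => ?_
  have hxT : x ∈ T := hT.frontier_subset hx
  set P := connectedComponentIn T x
  have hxP : x ∈ P := mem_connectedComponentIn hxT
  have hPc : IsCompact P := (hT.connectedComponentIn x).isCompact
  refine mem_biUnion ⟨x, hxT, rfl⟩ ?_
  by_contra hend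
  simp only [mem_insert_iff, mem_singleton_iff, not_or] at hend
  have hIoo : Ioo (sInf P) (sSup P) ⊆ T :=
    Ioo_subset_Icc_self.trans <| (isPreconnected_connectedComponentIn.ordConnected.out
      (hPc.sInf_mem ⟨x, hxP⟩) (hPc.sSup_mem ⟨x, hxP⟩)).trans (connectedComponentIn_subset T x)
  exact hx.2 (interior_maximal hIoo isOpen_Ioo
    ⟨(sInf_le hxP).lt_of_ne (Ne.symm hend.1), (le_sSup hxP).lt_of_ne hend.2⟩)

theorem sInf_injOn_connectedComponentsIn (S : Set α) :
    InjOn sInf (connectedComponentsIn S) := by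
  have key : ∀ {p q}, p ∈ S → q ∈ S →
      sInf (connectedComponentIn S p) = sInf (connectedComponentIn S q) → p ≤ q →
      connectedComponentIn S p = connectedComponentIn S q := by
    intro p q hp hq heq hpq
    have hpP := mem_connectedComponentIn hp
    by_cases hmp : sInf (connectedComponentIn S p) ∈ connectedComponentIn S p
    · have hcl : sInf (connectedComponentIn S p) ∈ closure (connectedComponentIn S q) :=
        heq ▸ csInf_mem_closure ⟨q, mem_connectedComponentIn hq⟩ (OrderBot.bddBelow _)
      rw [connectedComponentIn_eq hmp, connectedComponentIn_eq
        (mem_connectedComponentIn_of_mem_closure hcl (connectedComponentIn_subset S p hmp))]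
    · obtain ⟨r, hrQ, hrp⟩ := sInf_lt_iff.mp
        (heq ▸ (sInf_le hpP).lt_of_ne fun h => hmp (by rwa [h]))
      exact (connectedComponentIn_eq (isPreconnected_connectedComponentIn.ordConnected.out hrQ
        (mem_connectedComponentIn hq) ⟨hrp.le, hpq⟩)).symm
  rintro _ ⟨u, hu, rfl⟩ _ ⟨v, hv, rfl⟩ heq
  rcases le_total u v with huv | hvu
  exacts [key hu hv heq huv, (key hv hu heq.symm hvu).symm]

variable [DenselyOrdered α]

theorem exists_Ioo_notMem_of_isLeast {T : Set α} {x a b : α}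
    (ha : IsLeast (connectedComponentIn T x) a) (hb : b < a) : ∃ g ∈ Ioo b a, g ∉ T := by
  by_contra! hgap
  have haT : a ∈ T := connectedComponentIn_subset T x ha.1
  have hIoc : Ioc b a ⊆ connectedComponentIn T x := by
    rw [connectedComponentIn_eq ha.1]
    refine isPreconnected_Ioc.subset_connectedComponentIn ⟨hb, le_rfl⟩ fun g hg => ?_
    rcases hg.2.eq_or_lt with rfl | hlt
    exacts [haT, hgap g ⟨hg.1, hlt⟩]
  obtain ⟨c, hbc, hca⟩ := exists_between hb
  exact hca.not_ge (ha.2 (hIoc ⟨hbc, hca.le⟩))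

theorem exists_Ioo_notMem_of_isGreatest {T : Set α} {x a b : α}
    (ha : IsGreatest (connectedComponentIn T x) a) (hb : a < b) : ∃ g ∈ Ioo a b, g ∉ T := by
  obtain ⟨g, ⟨hbg, hga⟩, hg⟩ := exists_Ioo_notMem_of_isLeast (α := αᵒᵈ) ha hb
  exact ⟨g, ⟨hga, hbg⟩, hg⟩

theorem sInf_connectedComponentIn_mem_insert_bot_frontier {S : Set α} {x : α} (hx : x ∈ S) :
    sInf (connectedComponentIn S x) ∈ insert ⊥ (frontier S) := by
  set P := connectedComponentIn S x
  have hcl : sInf P ∈ closure P :=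
    csInf_mem_closure ⟨x, mem_connectedComponentIn hx⟩ (OrderBot.bddBelow P)
  by_contra! h
  simp only [mem_insert_iff, not_or] at h
  have hint : sInf P ∈ interior S := by
    by_contra h'
    exact h.2 ⟨closure_mono (connectedComponentIn_subset S x) hcl, h'⟩
  have hleast : IsLeast P (sInf P) :=
    ⟨mem_connectedComponentIn_of_mem_closure hcl (interior_subset hint), fun _ => sInf_le⟩
  obtain ⟨l, hl, hIoc⟩ := exists_Ioc_subset_of_mem_nhds (mem_interior_iff_mem_nhds.mp hint)
    ⟨⊥, bot_lt_iff_ne_bot.mpr h.1⟩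
  obtain ⟨g, hg, hgS⟩ := exists_Ioo_notMem_of_isLeast hleast hl
  exact hgS (hIoc (Ioo_subset_Ioc_self hg))

theorem connectedComponentsIn_finite_of_frontier_finite {S : Set α} (hS : (frontier S).Finite) :
    (connectedComponentsIn S).Finite := by
  refine Finite.of_finite_image (((hS.insert ⊥)).subset ?_) (sInf_injOn_connectedComponentsIn S)
  rintro _ ⟨_, ⟨x, hx, rfl⟩, rfl⟩
  exact sInf_connectedComponentIn_mem_insert_bot_frontier hx

end Order

structure IsArcDecomposition {G : Type*} [TopologicalSpace G] {n : ℕ}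
    (f : Fin n → unitInterval → G) : Prop where
  continuous : ∀ i, Continuous (f i)
  injective : ∀ i, Function.Injective (f i)
  iUnion_range : ⋃ i, range (f i) = univ
  range_inter_range_subset : ∀ i j, i ≠ j →
    range (f i) ∩ range (f j) ⊆ ({f i 0, f i 1} : Set G) ∩ {f j 0, f j 1}

theorem IsGraphSpace.exists_isArcDecomposition {G : Type*} [TopologicalSpace G]
    (hG : IsGraphSpace G) : ∃ (n : ℕ) (f : Fin n → unitInterval → G), IsArcDecomposition f :=
  let ⟨n, f, hf, hcov, hint⟩ := hG
  ⟨n, f, fun i => (hf i).1, fun i => (hf i).2, hcov, hint⟩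

instance : LocallyConnectedSpace unitInterval :=
  (IsQuotientMap.of_inverse continuous_subtype_val continuous_projIcc
    (projIcc_val zero_le_one)).isCoinducing.locallyConnectedSpace

namespace IsArcDecomposition

open unitInterval

variable {G : Type*} [TopologicalSpace G] {n : ℕ} {f : Fin n → I → G}

theorem exists_eq (hf : IsArcDecomposition f) (x : G) : ∃ i t, f i t = x := by
  obtain ⟨i, t, h⟩ := mem_iUnion.mp (hf.iUnion_range.symm ▸ mem_univ x : x ∈ ⋃ i, range (f i))
  exact ⟨i, t, h⟩

theorem apply_notMem_range (hf : IsArcDecomposition f) {i j : Fin n} (hji : j ≠ i) {t : I}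
    (ht0 : t ≠ 0) (ht1 : t ≠ 1) : f i t ∉ range (f j) := fun hj => by
  rcases (hf.range_inter_range_subset i j hji.symm ⟨mem_range_self t, hj⟩).1 with h | h
  exacts [ht0 (hf.injective i h), ht1 (hf.injective i h)]

variable [T2Space G]

/-- The other arcs meet `f i` only at its endpoints, so they stay away from `f i '' U`. -/
theorem isOpen_image (hf : IsArcDecomposition f) (i : Fin n) {U : Set I} (hU : IsOpen U)
    (h0 : 0 ∉ U) (h1 : 1 ∉ U) : IsOpen (f i '' U) := by
  have hcompl : (f i '' U)ᶜ = (⋃ j ∈ {j | j ≠ i}, range (f j)) ∪ f i '' Uᶜ := by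
    ext x
    obtain ⟨j, t, rfl⟩ := hf.exists_eq x
    constructor
    · intro hx
      by_cases hji : j = i
      · subst hji
        exact Or.inr ⟨t, fun ht => hx ⟨t, ht, rfl⟩, rfl⟩
      · exact Or.inl (mem_biUnion hji (mem_range_self t))
    · rintro (hx | ⟨s, hs, hst⟩) ⟨u, hu, hut⟩
      · obtain ⟨k, hki, hk⟩ := mem_iUnion₂.mp hx
        exact hf.apply_notMem_range hki (ne_of_mem_of_not_mem hu h0)
          (ne_of_mem_of_not_mem hu h1) (hut ▸ hk)
      · exact hs (hf.injective i (hst.trans hut.symm) ▸ hu)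
  rw [← isClosed_compl_iff, hcompl]
  exact ((toFinite _).isClosed_biUnion fun j _ =>
    (isCompact_range (hf.continuous j)).isClosed).union
      (hU.isClosed_compl.isCompact.image (hf.continuous i)).isClosed

theorem locallyConnectedSpace (hf : IsArcDecomposition f) : LocallyConnectedSpace G :=
  (IsQuotientMap.of_surjective_continuous (f := fun p : Fin n × I => f p.1 p.2)
    (fun x => let ⟨i, t, h⟩ := hf.exists_eq x; ⟨(i, t), h⟩)
    (continuous_prod_of_discrete_left.mpr hf.continuous)).isCoinducing.locallyConnectedSpace

theorem subset_image_of_isPreconnected (hf : IsArcDecomposition f) (i : Fin n) {K : Set G}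
    (hK : IsPreconnected K) {U C : Set I} (hU : IsOpen U) (h0 : 0 ∉ U) (h1 : 1 ∉ U)
    (hC : IsClosed C) (hUC : U ⊆ C) (hKC : K ∩ f i '' C ⊆ f i '' U)
    (hne : (K ∩ f i '' U).Nonempty) : K ⊆ f i '' U := by
  have hCc : IsClosed (f i '' C) := (hC.isCompact.image (hf.continuous i)).isClosed
  intro z hz
  by_contra hzU
  obtain ⟨w, -, hwU, hwC⟩ := hK _ _ (hf.isOpen_image i hU h0 h1) hCc.isOpen_compl
    (fun y hy => or_iff_not_imp_right.mpr fun hyC => hKC ⟨hy, not_not.mp hyC⟩) hne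
    ⟨z, hz, fun hzC => hzU (hKC ⟨hz, hzC⟩)⟩
  exact hwC (image_mono hUC hwU)

/-- A component avoiding both endpoints is flanked by gaps of `f i ⁻¹' K`, which cut out an open
piece of the arc; being connected, `K` lies inside that piece. -/
theorem connectedComponentIn_preimage_eq (hf : IsArcDecomposition f) (i : Fin n) {K : Set G}
    (hKc : IsClosed K) (hK : IsPreconnected K) {t : I} (ht : f i t ∈ K)
    (h0 : 0 ∉ connectedComponentIn (f i ⁻¹' K) t) (h1 : 1 ∉ connectedComponentIn (f i ⁻¹' K) t) :
    connectedComponentIn (f i ⁻¹' K) t = f i ⁻¹' K := by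
  set P := connectedComponentIn (f i ⁻¹' K) t
  have htP : t ∈ P := mem_connectedComponentIn ht
  have hPc : IsCompact P := ((hKc.preimage (hf.continuous i)).connectedComponentIn t).isCompact
  have hinf := hPc.isLeast_sInf ⟨t, htP⟩
  have hsup := hPc.isGreatest_sSup ⟨t, htP⟩
  obtain ⟨g₁, hg₁, hg₁K⟩ := exists_Ioo_notMem_of_isLeast hinf
    (bot_lt_iff_ne_bot.mpr (ne_of_mem_of_not_mem hinf.1 h0))
  obtain ⟨g₂, hg₂, hg₂K⟩ := exists_Ioo_notMem_of_isGreatest hsup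
    (lt_top_iff_ne_top.mpr (ne_of_mem_of_not_mem hsup.1 h1))
  have hKC : K ∩ f i '' Icc g₁ g₂ ⊆ f i '' Ioo g₁ g₂ := by
    rintro _ ⟨hyK, u, hu, rfl⟩
    have hu' : u ∈ f i ⁻¹' K := hyK
    exact ⟨u, ⟨hu.1.lt_of_ne (ne_of_mem_of_not_mem hu' hg₁K).symm,
      hu.2.lt_of_ne (ne_of_mem_of_not_mem hu' hg₂K)⟩, rfl⟩
  have hKsub : K ⊆ f i '' Ioo g₁ g₂ :=
    hf.subset_image_of_isPreconnected i hK isOpen_Ioo (fun h => h.1.not_ge bot_le)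
      (fun h => h.2.not_ge le_top) isClosed_Icc Ioo_subset_Icc_self hKC
      ⟨f i t, ht, t, ⟨hg₁.2.trans_le (hinf.2 htP), (hsup.2 htP).trans_lt hg₂.1⟩, rfl⟩
  have hpre : IsPreconnected (f i ⁻¹' K) := by
    rw [← ((hf.continuous i).isClosedEmbedding (hf.injective i)).isInducing.isPreconnected_image,
      image_preimage_eq_of_subset (hKsub.trans (image_subset_range _ _))]
    exact hK
  exact subset_antisymm (connectedComponentIn_subset _ _)
    (hpre.subset_connectedComponentIn ht subset_rfl)

theorem connectedComponentsIn_preimage_finite (hf : IsArcDecomposition f) (i : Fin n)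
    {A : Set G} (hA : IsClosed A) (hcomp : (connectedComponentsIn A).Finite) :
    (connectedComponentsIn (f i ⁻¹' A)).Finite := by
  have hK : ∀ K ∈ connectedComponentsIn A, (connectedComponentsIn (f i ⁻¹' K)).Finite := by
    rintro _ ⟨x, -, rfl⟩
    refine (toFinite {f i ⁻¹' connectedComponentIn A x,
      connectedComponentIn (f i ⁻¹' connectedComponentIn A x) 0,
      connectedComponentIn (f i ⁻¹' connectedComponentIn A x) 1}).subset ?_
    rintro _ ⟨t, ht, rfl⟩
    by_cases h0 : 0 ∈ connectedComponentIn (f i ⁻¹' connectedComponentIn A x) t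
    · exact Or.inr (Or.inl (connectedComponentIn_eq h0))
    by_cases h1 : 1 ∈ connectedComponentIn (f i ⁻¹' connectedComponentIn A x) t
    · exact Or.inr (Or.inr (connectedComponentIn_eq h1))
    exact Or.inl (hf.connectedComponentIn_preimage_eq i (hA.connectedComponentIn x)
      isPreconnected_connectedComponentIn ht h0 h1)
  refine connectedComponentsIn_finite_of_cover (hcomp.biUnion hK) (fun t ht => ?_) ?_
  · exact ⟨_, mem_biUnion ⟨f i t, ht, rfl⟩ ⟨t, mem_connectedComponentIn ht, rfl⟩,
      mem_connectedComponentIn (mem_connectedComponentIn ht)⟩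
  · simp only [mem_iUnion]
    rintro _ ⟨_, ⟨x, -, rfl⟩, t, -, rfl⟩
    exact ⟨(connectedComponentIn_subset _ _).trans
      (preimage_mono (connectedComponentIn_subset _ _)), isPreconnected_connectedComponentIn⟩

theorem frontier_finite (hf : IsArcDecomposition f) {A : Set G} (hA : IsClosed A)
    (hcomp : (connectedComponentsIn A).Finite) : (frontier A).Finite := by
  have hT : ∀ i, (frontier (f i ⁻¹' A)).Finite := fun i =>
    frontier_finite_of_connectedComponentsIn_finite (hA.preimage (hf.continuous i))
      (hf.connectedComponentsIn_preimage_finite i hA hcomp)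
  refine (finite_iUnion fun i => ((hT i).union (toFinite {0, 1})).image (f i)).subset
    fun x hx => ?_
  obtain ⟨i, t, rfl⟩ := hf.exists_eq x
  refine mem_iUnion.mpr ⟨i, t, ?_, rfl⟩
  by_contra ht
  simp only [mem_union, mem_insert_iff, mem_singleton_iff, not_or] at ht
  obtain ⟨htfr, ht0, ht1⟩ := ht
  have htint : t ∈ interior (f i ⁻¹' A) := by
    by_contra h
    exact htfr ⟨subset_closure (hA.frontier_subset hx : f i t ∈ A), h⟩
  have hU : IsOpen (interior (f i ⁻¹' A) \ {0, 1}) :=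
    isOpen_interior.sdiff (toFinite _).isClosed
  refine hx.2 (interior_maximal ?_ (hf.isOpen_image i hU (by simp) (by simp))
    ⟨t, ⟨htint, by simp [ht0, ht1]⟩, rfl⟩)
  rintro _ ⟨u, hu, rfl⟩
  exact (interior_subset hu.1 : u ∈ f i ⁻¹' A)

theorem connectedComponentsIn_compl_finite (hf : IsArcDecomposition f) {A : Set G}
    (hA : IsClosed A) (hcomp : (connectedComponentsIn A).Finite) :
    (connectedComponentsIn Aᶜ).Finite := by
  have hO : ∀ i, (connectedComponentsIn (f i ⁻¹' Aᶜ)).Finite := fun i => by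
    refine connectedComponentsIn_finite_of_frontier_finite ?_
    rw [preimage_compl, frontier_compl]
    exact frontier_finite_of_connectedComponentsIn_finite (hA.preimage (hf.continuous i))
      (hf.connectedComponentsIn_preimage_finite i hA hcomp)
  refine connectedComponentsIn_finite_of_cover (finite_iUnion fun i => (hO i).image (image (f i)))
    (fun x hx => ?_) ?_
  · obtain ⟨i, t, rfl⟩ := hf.exists_eq x
    exact ⟨_, mem_iUnion.mpr ⟨i, _, ⟨t, hx, rfl⟩, rfl⟩, t, mem_connectedComponentIn hx, rfl⟩
  · simp only [mem_iUnion]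
    rintro _ ⟨i, _, ⟨t, -, rfl⟩, rfl⟩
    exact ⟨image_subset_iff.mpr (connectedComponentIn_subset _ _),
      isPreconnected_connectedComponentIn.image _ (hf.continuous i).continuousOn⟩

end IsArcDecomposition

section Complement

variable {X : Type*} [TopologicalSpace X]

def complementComponentsAvoiding (A B : Set X) : Set (Set X) :=
  {C ∈ connectedComponentsIn Aᶜ | frontier C ∩ B = ∅}

theorem frontier_connectedComponentIn_compl_nonempty [PreconnectedSpace X] {A : Set X}
    (hAne : A.Nonempty) {x : X} (hx : x ∉ A) : (frontier (connectedComponentIn Aᶜ x)).Nonempty :=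
  nonempty_frontier_iff.mpr ⟨⟨x, mem_connectedComponentIn hx⟩, fun h =>
    let ⟨a, ha⟩ := hAne
    connectedComponentIn_subset Aᶜ x (h ▸ mem_univ a) ha⟩

theorem union_closure_sUnion_complementComponentsAvoiding {A B₁ B₂ : Set X}
    (h₁ : ConsistentComplement A B₁) (hdisj : B₁ ∩ B₂ = ∅) :
    (A ∪ closure (⋃₀ complementComponentsAvoiding A B₁)) ∪
      (A ∪ closure (⋃₀ complementComponentsAvoiding A B₂)) = univ := by
  refine eq_univ_of_forall fun x => ?_
  by_cases hx : x ∈ A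
  · exact Or.inl (Or.inl hx)
  have hxC : ∀ {B}, frontier (connectedComponentIn Aᶜ x) ∩ B = ∅ →
      x ∈ closure (⋃₀ complementComponentsAvoiding A B) := fun hB =>
    subset_closure ⟨_, ⟨⟨x, hx, rfl⟩, hB⟩, mem_connectedComponentIn hx⟩
  rcases h₁ x hx with h | h
  · exact Or.inr (Or.inr (hxC (eq_empty_of_subset_empty fun y hy =>
      hdisj.subset ⟨h hy.1, hy.2⟩)))
  · exact Or.inl (Or.inr (hxC h))

variable [LocallyConnectedSpace X]

theorem frontier_connectedComponentIn_compl_subset {A : Set X} (hA : IsClosed A) (x : X) :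
    frontier (connectedComponentIn Aᶜ x) ⊆ frontier A := by
  intro y hy
  rw [hA.isOpen_compl.connectedComponentIn.frontier_eq] at hy
  have hyA : y ∈ A := by_contra fun h => hy.2 (mem_connectedComponentIn_of_mem_closure hy.1 h)
  refine ⟨subset_closure hyA, fun hint => ?_⟩
  obtain ⟨z, hzint, hzC⟩ := mem_closure_iff.mp hy.1 _ isOpen_interior hint
  exact connectedComponentIn_subset _ _ hzC (interior_subset hzint)

theorem sideOf_eq_union_closure [T1Space X] [PreconnectedSpace X] {A B : Set X}
    (hA : IsRegularSet A) (hAne : A.Nonempty) (hBA : B ⊆ frontier A) (hB : B.Finite)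
    (hcc : ConsistentComplement A B) :
    sideOf B A = A ∪ closure (⋃₀ complementComponentsAvoiding A B) := by
  have hcompl : ∀ {z}, z ∉ A → connectedComponentIn Aᶜ z ⊆ Bᶜ := fun _ _ hw hwB =>
    connectedComponentIn_subset _ _ hw (hA.1.frontier_subset (hBA hwB))
  have hunion : (⋃ x ∈ {x | x ∉ B ∧ (connectedComponentIn Bᶜ x ∩ A).Nonempty},
      connectedComponentIn Bᶜ x) = (A \ B) ∪ ⋃₀ complementComponentsAvoiding A B := by
    ext y
    simp only [mem_iUnion, mem_ofPred_eq, exists_prop, mem_union, mem_sdiff, mem_sUnion]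
    constructor
    · rintro ⟨x, ⟨-, a, haC, haA⟩, hyx⟩
      by_cases hyA : y ∈ A
      · exact Or.inl ⟨hyA, connectedComponentIn_subset _ _ hyx⟩
      refine Or.inr ⟨_, ⟨⟨y, hyA, rfl⟩, (hcc y hyA).resolve_left fun hfr => ?_⟩,
        mem_connectedComponentIn hyA⟩
      have hC : connectedComponentIn Bᶜ y = connectedComponentIn Aᶜ y :=
        connectedComponentIn_eq_of_disjoint_frontier isPreconnected_connectedComponentIn
          hA.1.isOpen_compl.connectedComponentIn (hcompl hyA)
          (disjoint_compl_right_iff_subset.mpr hfr) (mem_connectedComponentIn hyA)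
      rw [connectedComponentIn_eq hyx, hC] at haC
      exact connectedComponentIn_subset _ _ haC haA
    · rintro (⟨hyA, hyB⟩ | ⟨_, ⟨⟨z, hz, rfl⟩, hfr⟩, hyC⟩)
      · exact ⟨y, ⟨hyB, y, mem_connectedComponentIn hyB, hyA⟩, mem_connectedComponentIn hyB⟩
      have hyB : y ∉ B := hcompl hz hyC
      have hcl : closure (connectedComponentIn Aᶜ z) ⊆ connectedComponentIn Bᶜ y := by
        refine isPreconnected_connectedComponentIn.closure.subset_connectedComponentIn
          (subset_closure hyC) ?_
        rw [closure_eq_self_union_frontier]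
        exact union_subset (hcompl hz) fun w hw hwB => hfr.subset ⟨hw, hwB⟩
      obtain ⟨w, hw⟩ := frontier_connectedComponentIn_compl_nonempty hAne hz
      exact ⟨y, ⟨hyB, w, hcl (frontier_subset_closure hw),
        hA.1.frontier_subset (frontier_connectedComponentIn_compl_subset hA.1 z hw)⟩,
        mem_connectedComponentIn hyB⟩
  rw [sideOf, hunion, closure_union, closure_sdiff_finite_eq hA.1 hA.2.2 hB]

theorem isRegularSet_union_closure_sUnion [T1Space X] [ConnectedSpace X] {A : Set X}
    (hA : IsRegularSet A) (hAne : A.Nonempty) {S : Set (Set X)}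
    (hS : S ⊆ connectedComponentsIn Aᶜ) (hSfin : S.Finite) :
    IsRegularSet (A ∪ closure (⋃₀ S)) := by
  obtain ⟨a, ha⟩ := hAne
  obtain ⟨p, -, q, -, hpq⟩ := hA.2.2 a ha
  have : Nontrivial X := ⟨⟨p, q, hpq⟩⟩
  have hC : ∀ C ∈ S, IsOpen C ∧ C.Nonempty ∧ IsPreconnected C := by
    intro C hC
    obtain ⟨x, hx, rfl⟩ := hS hC
    exact ⟨hA.1.isOpen_compl.connectedComponentIn, ⟨x, mem_connectedComponentIn hx⟩,
      isPreconnected_connectedComponentIn⟩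
  have hsub : ∀ C ∈ S, closure C ⊆ A ∪ ⋃ C ∈ S, closure C := fun C hCS =>
    (subset_biUnion_of_mem hCS).trans subset_union_right
  rw [hSfin.closure_sUnion]
  refine ⟨hA.1.union (hSfin.isClosed_biUnion fun _ _ => isClosed_closure), ?_, ?_⟩
  · refine connectedComponentsIn_finite_of_cover ((hA.2.1.union (hSfin.image closure)))
      (fun x hx => ?_) ?_
    · rcases hx with hx | hx
      · exact ⟨_, Or.inl ⟨x, hx, rfl⟩, mem_connectedComponentIn hx⟩
      · obtain ⟨C, hCS, hxC⟩ := mem_iUnion₂.mp hx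
        exact ⟨_, Or.inr ⟨C, hCS, rfl⟩, hxC⟩
    · rintro _ (⟨x, -, rfl⟩ | ⟨C, hCS, rfl⟩)
      · exact ⟨(connectedComponentIn_subset _ _).trans subset_union_left,
          isPreconnected_connectedComponentIn⟩
      · exact ⟨hsub C hCS, (hC C hCS).2.2.closure⟩
  · rintro x (hx | hx)
    · exact (hA.2.2 x hx).mono (connectedComponentIn_mono x subset_union_left)
    · obtain ⟨C, hCS, hxC⟩ := mem_iUnion₂.mp hx
      obtain ⟨hCo, ⟨c, hc⟩, hCp⟩ := hC C hCS
      exact ((infinite_of_mem_nhds c (hCo.mem_nhds hc)).nontrivial).mono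
        (subset_closure.trans (hCp.closure.subset_connectedComponentIn hxC (hsub C hCS)))

theorem disjoint_closure_of_mem_complementComponentsAvoiding [PreconnectedSpace X]
    {A B₁ B₂ : Set X} (hA : IsClosed A) (hAne : A.Nonempty) (hfr : frontier A ⊆ B₁ ∪ B₂)
    (hdisj : B₁ ∩ B₂ = ∅) {C₁ C₂ : Set X} (hC₁ : C₁ ∈ complementComponentsAvoiding A B₁)
    (hC₂ : C₂ ∈ complementComponentsAvoiding A B₂) : Disjoint (closure C₁) (closure C₂) := by
  obtain ⟨⟨x₁, hx₁, rfl⟩, hC₁B⟩ := hC₁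
  obtain ⟨⟨x₂, hx₂, rfl⟩, hC₂B⟩ := hC₂
  have hfr₁ : frontier (connectedComponentIn Aᶜ x₁) ⊆ B₂ := fun y hy =>
    (hfr (frontier_connectedComponentIn_compl_subset hA x₁ hy)).resolve_left
      fun hyB => hC₁B.subset ⟨hy, hyB⟩
  have hfr₂ : frontier (connectedComponentIn Aᶜ x₂) ⊆ B₁ := fun y hy =>
    (hfr (frontier_connectedComponentIn_compl_subset hA x₂ hy)).resolve_right
      fun hyB => hC₂B.subset ⟨hy, hyB⟩
  have hfrA : ∀ x, frontier (connectedComponentIn Aᶜ x) ⊆ A := fun x =>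
    (frontier_connectedComponentIn_compl_subset hA x).trans hA.frontier_subset
  rw [Set.disjoint_left]
  intro y hy₁ hy₂
  rw [closure_eq_self_union_frontier] at hy₁ hy₂
  rcases hy₁ with hy₁ | hy₁ <;> rcases hy₂ with hy₂ | hy₂
  · obtain ⟨z, hz⟩ := frontier_connectedComponentIn_compl_nonempty hAne hx₁
    have hz₂ : z ∈ frontier (connectedComponentIn Aᶜ x₂) := by
      rwa [connectedComponentIn_eq hy₂, ← connectedComponentIn_eq hy₁]
    exact hdisj.subset ⟨hfr₂ hz₂, hfr₁ hz⟩
  · exact connectedComponentIn_subset _ _ hy₁ (hfrA x₂ hy₂)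
  · exact connectedComponentIn_subset _ _ hy₂ (hfrA x₁ hy₁)
  · exact hdisj.subset ⟨hfr₂ hy₂, hfr₁ hy₁⟩

theorem disjoint_closure_sUnion_complementComponentsAvoiding [PreconnectedSpace X]
    {A B₁ B₂ : Set X} (hA : IsClosed A) (hAne : A.Nonempty) (hfr : frontier A ⊆ B₁ ∪ B₂)
    (hdisj : B₁ ∩ B₂ = ∅) (hcomp : (connectedComponentsIn Aᶜ).Finite) :
    Disjoint (closure (⋃₀ complementComponentsAvoiding A B₁))
      (closure (⋃₀ complementComponentsAvoiding A B₂)) := by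
  rw [(hcomp.subset fun _ h => h.1).closure_sUnion, (hcomp.subset fun _ h => h.1).closure_sUnion]
  exact disjoint_iUnion₂_left.mpr fun _ hC₁ => disjoint_iUnion₂_right.mpr fun _ hC₂ =>
    disjoint_closure_of_mem_complementComponentsAvoiding hA hAne hfr hdisj hC₁ hC₂

end Complement

theorem stmt7_general (G : Type*) [TopologicalSpace G] [T2Space G]
    [ConnectedSpace G] (hG : IsGraphSpace G)
    (A B1 B2 : Set G) (hA : IsRegularSet A) (hAne : A.Nonempty)
    (hunion : B1 ∪ B2 = frontier A) (hdisj : B1 ∩ B2 = ∅)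
    (h1 : ConsistentComplement A B1) (h2 : ConsistentComplement A B2) :
    (IsRegularSet (sideOf B1 A) ∧ (sideOf B1 A).Nonempty ∧
      IsRegularSet A ∧ A.Nonempty ∧
      IsRegularSet (sideOf B2 A) ∧ (sideOf B2 A).Nonempty) ∧
    sideOf B1 A ∪ sideOf B2 A = Set.univ ∧
    A = sideOf B1 A ∩ sideOf B2 A ∧
    closure (sideOf B1 A \ A) ∩ closure (sideOf B2 A \ A) = ∅ := by
  obtain ⟨n, f, hf⟩ := hG.exists_isArcDecomposition
  have := hf.locallyConnectedSpace
  have hfr : (frontier A).Finite := hf.frontier_finite hA.1 hA.2.1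
  have hcomp := hf.connectedComponentsIn_compl_finite hA.1 hA.2.1
  have hB₁ : B1 ⊆ frontier A := hunion ▸ subset_union_left
  have hB₂ : B2 ⊆ frontier A := hunion ▸ subset_union_right
  have hS : ∀ B, complementComponentsAvoiding A B ⊆ connectedComponentsIn Aᶜ := fun _ _ h => h.1
  have hD := disjoint_closure_sUnion_complementComponentsAvoiding hA.1 hAne hunion.symm.subset
    hdisj hcomp
  rw [sideOf_eq_union_closure hA hAne hB₁ (hfr.subset hB₁) h1,
    sideOf_eq_union_closure hA hAne hB₂ (hfr.subset hB₂) h2]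
  refine ⟨⟨isRegularSet_union_closure_sUnion hA hAne (hS B1) (hcomp.subset (hS B1)),
    hAne.mono subset_union_left, hA, hAne,
    isRegularSet_union_closure_sUnion hA hAne (hS B2) (hcomp.subset (hS B2)),
    hAne.mono subset_union_left⟩, union_closure_sUnion_complementComponentsAvoiding h1 hdisj,
    by rw [← union_inter_distrib_left, hD.inter_eq, union_empty], ?_⟩
  rw [union_sdiff_left, union_sdiff_left, ← disjoint_iff_inter_eq_empty]
  exact hD.mono (closure_minimal sdiff_subset isClosed_closure)
    (closure_minimal sdiff_subset isClosed_closure)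

/-- the sets σ_{B₁}(A), A, σ_{B₂}(A) satisfy (F1), (F2), (F3) of a simple fold. -/
theorem stmt7 (G : Type*) [TopologicalSpace G] [CompactSpace G] [T2Space G]
    [ConnectedSpace G] (hG : IsGraphSpace G)
    (A B1 B2 : Set G) (hA : IsRegularSet A) (hAne : A.Nonempty)
    (hunion : B1 ∪ B2 = frontier A) (hdisj : B1 ∩ B2 = ∅)
    (h1 : ConsistentComplement A B1) (h2 : ConsistentComplement A B2) :
    (IsRegularSet (sideOf B1 A) ∧ (sideOf B1 A).Nonempty ∧
      IsRegularSet A ∧ A.Nonempty ∧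
      IsRegularSet (sideOf B2 A) ∧ (sideOf B2 A).Nonempty) ∧
    sideOf B1 A ∪ sideOf B2 A = Set.univ ∧
    A = sideOf B1 A ∩ sideOf B2 A ∧
    closure (sideOf B1 A \ A) ∩ closure (sideOf B2 A \ A) = ∅ :=
  stmt7_general G hG A B1 B2 hA hAne hunion hdisj h1 h2
end
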